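/- arXiv:2604.19603 — 12 statements merged into one kernel-verified Lean document; each statement's English description precedes it below -/
import Mathlib

section
/- For a bounded kernel K and f, g ∈ ℓ¹(ℤ), the collision operator satisfies ‖Q(f,g)‖₁ ≤ 4 C_K ‖f‖₁ ‖g‖₁; and if f ∈ ℓ_{1,1}(ℤ), then ‖Q(f,g)‖_{1,1} ≤ 6 C_K ‖f‖_{1,1} ‖g‖₁. -/
open scoped BigOperators

set_option maxHeartbeats 1000000

/-- The charge-exchange collision operator. -/
noncomputable def Qop (K : ℤ → ℤ → ℝ) (f g : ℤ → ℝ) (k : ℤ) : ℝ :=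
  ∑' l : ℤ, (K l (k - 1) * g l * f (k - 1) - K k (l - 1) * f k * g (l - 1)
      - K l k * g l * f k + K (k + 1) (l - 1) * f (k + 1) * g (l - 1))

theorem Q_norm_bounds (K : ℤ → ℤ → ℝ) (CK : ℝ) (hCK : 0 < CK)
    (hK0 : ∀ k l, 0 ≤ K k l) (hKb : ∀ k l, K k l ≤ CK)
    (f g : ℤ → ℝ) (hf : Summable fun k => |f k|) (hg : Summable fun k => |g k|) :
    (∑' k : ℤ, |Qop K f g k| ≤ 4 * CK * (∑' k : ℤ, |f k|) * (∑' k : ℤ, |g k|)) ∧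
      ((Summable fun k : ℤ => (1 + |(k : ℝ)|) * |f k|) →
        ∑' k : ℤ, (1 + |(k : ℝ)|) * |Qop K f g k| ≤
          6 * CK * (∑' k : ℤ, (1 + |(k : ℝ)|) * |f k|) * (∑' k : ℤ, |g k|)) := by
  set Sg := ∑' l : ℤ, |g l| with hSgdef
  set Sf := ∑' k : ℤ, |f k| with hSfdef
  have hSg0 : 0 ≤ Sg := tsum_nonneg fun _ => abs_nonneg _
  have hgshift : Summable fun l : ℤ => |g (l - 1)| :=
    ((Equiv.subRight (1 : ℤ)).summable_iff (f := fun l => |g l|)).mpr hg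
  have hgshift_eq : ∑' l : ℤ, |g (l - 1)| = Sg :=
    (Equiv.subRight (1 : ℤ)).tsum_eq (fun l => |g l|)
  -- pointwise key bound
  have key : ∀ k : ℤ, |Qop K f g k| ≤
      CK * Sg * (|f (k - 1)| + 2 * |f k| + |f (k + 1)|) := by
    intro k
    set T : ℤ → ℝ := fun l => K l (k - 1) * g l * f (k - 1) - K k (l - 1) * f k * g (l - 1)
      - K l k * g l * f k + K (k + 1) (l - 1) * f (k + 1) * g (l - 1) with hT
    set B : ℤ → ℝ := fun l => CK * |f (k - 1)| * |g l| + CK * |f k| * |g (l - 1)|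
      + CK * |f k| * |g l| + CK * |f (k + 1)| * |g (l - 1)| with hB
    have habs : ∀ (a b : ℤ) (x y : ℝ), |K a b * x * y| ≤ CK * |y| * |x| := by
      intro a b x y
      rw [abs_mul, abs_mul, abs_of_nonneg (hK0 a b)]
      have h0 := hK0 a b
      have h1 := hKb a b
      have h2 := abs_nonneg x
      have h3 := abs_nonneg y
      nlinarith [mul_nonneg h2 h3, mul_nonneg h0 h2]
    have hTB : ∀ l, |T l| ≤ B l := by
      intro l
      have t1 := habs l (k - 1) (g l) (f (k - 1))
      have t2 := habs k (l - 1) (f k) (g (l - 1))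
      have t3 := habs l k (g l) (f k)
      have t4 := habs (k + 1) (l - 1) (f (k + 1)) (g (l - 1))
      have tri : |T l| ≤ |K l (k - 1) * g l * f (k - 1)| + |K k (l - 1) * f k * g (l - 1)|
          + |K l k * g l * f k| + |K (k + 1) (l - 1) * f (k + 1) * g (l - 1)| := by
        calc |T l| ≤ |K l (k - 1) * g l * f (k - 1) - K k (l - 1) * f k * g (l - 1)
              - K l k * g l * f k| + |K (k + 1) (l - 1) * f (k + 1) * g (l - 1)| := abs_add_le _ _
          _ ≤ (|K l (k - 1) * g l * f (k - 1) - K k (l - 1) * f k * g (l - 1)|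
              + |K l k * g l * f k|) + |K (k + 1) (l - 1) * f (k + 1) * g (l - 1)| := by
                have := abs_sub (K l (k - 1) * g l * f (k - 1) - K k (l - 1) * f k * g (l - 1))
                  (K l k * g l * f k)
                linarith
          _ ≤ (|K l (k - 1) * g l * f (k - 1)| + |K k (l - 1) * f k * g (l - 1)|
              + |K l k * g l * f k|) + |K (k + 1) (l - 1) * f (k + 1) * g (l - 1)| := by
                have := abs_sub (K l (k - 1) * g l * f (k - 1)) (K k (l - 1) * f k * g (l - 1))
                linarith
      simp only [hB]
      linarith
    have hB1 : Summable fun l : ℤ => CK * |f (k - 1)| * |g l| := hg.mul_left _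
    have hB2 : Summable fun l : ℤ => CK * |f k| * |g (l - 1)| := hgshift.mul_left _
    have hB3 : Summable fun l : ℤ => CK * |f k| * |g l| := hg.mul_left _
    have hB4 : Summable fun l : ℤ => CK * |f (k + 1)| * |g (l - 1)| := hgshift.mul_left _
    have hBsum : Summable B := ((hB1.add hB2).add hB3).add hB4
    have hTabs : Summable fun l => |T l| :=
      Summable.of_nonneg_of_le (fun _ => abs_nonneg _) hTB hBsum
    have hTsum : Summable T := hTabs.of_abs
    have h1 : |Qop K f g k| ≤ ∑' l, |T l| := by
      have e : Qop K f g k = ∑' l, T l := rfl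
      rw [e]
      simpa only [Real.norm_eq_abs] using
        norm_tsum_le_tsum_norm (f := T) (by simpa only [Real.norm_eq_abs] using hTabs)
    have h2 : (∑' l, |T l|) ≤ ∑' l, B l := Summable.tsum_le_tsum hTB hTabs hBsum
    have h3 : (∑' l, B l) = CK * |f (k - 1)| * Sg + CK * |f k| * Sg
        + CK * |f k| * Sg + CK * |f (k + 1)| * Sg := by
      simp only [hB]
      rw [Summable.tsum_add ((hB1.add hB2).add hB3) hB4, Summable.tsum_add (hB1.add hB2) hB3, Summable.tsum_add hB1 hB2,
        tsum_mul_left, tsum_mul_left, tsum_mul_left, tsum_mul_left, hgshift_eq]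
    calc |Qop K f g k| ≤ ∑' l, B l := le_trans h1 h2
      _ = CK * Sg * (|f (k - 1)| + 2 * |f k| + |f (k + 1)|) := by rw [h3]; ring
  have hfm : Summable fun k : ℤ => |f (k - 1)| :=
    ((Equiv.subRight (1 : ℤ)).summable_iff (f := fun k => |f k|)).mpr hf
  have hfp : Summable fun k : ℤ => |f (k + 1)| :=
    ((Equiv.addRight (1 : ℤ)).summable_iff (f := fun k => |f k|)).mpr hf
  have hfm_eq : ∑' k : ℤ, |f (k - 1)| = Sf := (Equiv.subRight (1 : ℤ)).tsum_eq (fun k => |f k|)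
  have hfp_eq : ∑' k : ℤ, |f (k + 1)| = Sf := (Equiv.addRight (1 : ℤ)).tsum_eq (fun k => |f k|)
  constructor
  · -- unweighted bound
    have hGsum0 : Summable fun k : ℤ => |f (k - 1)| + 2 * |f k| + |f (k + 1)| :=
      (hfm.add (hf.mul_left 2)).add hfp
    have hGsum : Summable fun k : ℤ =>
        CK * Sg * (|f (k - 1)| + 2 * |f k| + |f (k + 1)|) := hGsum0.mul_left _
    have hQsum : Summable fun k : ℤ => |Qop K f g k| :=
      Summable.of_nonneg_of_le (fun _ => abs_nonneg _) key hGsum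
    have h1 : (∑' k : ℤ, |Qop K f g k|) ≤
        ∑' k : ℤ, CK * Sg * (|f (k - 1)| + 2 * |f k| + |f (k + 1)|) :=
      Summable.tsum_le_tsum key hQsum hGsum
    have h2 : (∑' k : ℤ, CK * Sg * (|f (k - 1)| + 2 * |f k| + |f (k + 1)|))
        = CK * Sg * (Sf + 2 * Sf + Sf) := by
      rw [tsum_mul_left, Summable.tsum_add (hfm.add (hf.mul_left 2)) hfp,
        Summable.tsum_add hfm (hf.mul_left 2), tsum_mul_left, hfm_eq, hfp_eq]
    calc (∑' k : ℤ, |Qop K f g k|) ≤ CK * Sg * (Sf + 2 * Sf + Sf) := h1.trans_eq h2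
      _ = 4 * CK * Sf * Sg := by ring
  · -- weighted bound
    intro hf11
    set w : ℤ → ℝ := fun k => 1 + |(k : ℝ)| with hw
    set Sw := ∑' k : ℤ, w k * |f k| with hSw
    have hw0 : ∀ k, 0 ≤ w k := fun k => by positivity
    have hwshiftm : ∀ j : ℤ, w (j + 1) ≤ 2 * w j := by
      intro j
      simp only [hw]
      push_cast
      have := abs_add_le (j : ℝ) 1
      have := abs_nonneg (j : ℝ)
      have h := abs_add_le (j : ℝ) 1
      rw [abs_one] at h
      linarith
    have hwshiftp : ∀ j : ℤ, w (j - 1) ≤ 2 * w j := by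
      intro j
      simp only [hw]
      push_cast
      have h := abs_sub (j : ℝ) 1
      rw [abs_one] at h
      have := abs_nonneg (j : ℝ)
      linarith
    -- summability and tsum bounds for shifted weighted f
    have hFm' : Summable fun j : ℤ => w (j + 1) * |f j| :=
      Summable.of_nonneg_of_le (fun j => mul_nonneg (hw0 _) (abs_nonneg _))
        (fun j => mul_le_mul_of_nonneg_right (hwshiftm j) (abs_nonneg _))
        (by simpa [mul_assoc] using hf11.mul_left 2)
    have hFp' : Summable fun j : ℤ => w (j - 1) * |f j| :=
      Summable.of_nonneg_of_le (fun j => mul_nonneg (hw0 _) (abs_nonneg _))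
        (fun j => mul_le_mul_of_nonneg_right (hwshiftp j) (abs_nonneg _))
        (by simpa [mul_assoc] using hf11.mul_left 2)
    have hFm : Summable fun k : ℤ => w k * |f (k - 1)| :=
      ((Equiv.addRight (1 : ℤ)).summable_iff (f := fun k => w k * |f (k - 1)|)).mp
        (by simpa [Function.comp_def] using hFm')
    have hFp : Summable fun k : ℤ => w k * |f (k + 1)| :=
      ((Equiv.subRight (1 : ℤ)).summable_iff (f := fun k => w k * |f (k + 1)|)).mp
        (by simpa [Function.comp_def] using hFp')
    have hSw0 : 0 ≤ Sw := tsum_nonneg fun k => mul_nonneg (hw0 _) (abs_nonneg _)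
    have hFm_le : (∑' k : ℤ, w k * |f (k - 1)|) ≤ 2 * Sw := by
      have e : (∑' k : ℤ, w k * |f (k - 1)|) = ∑' j : ℤ, w (j + 1) * |f j| := by
        rw [← (Equiv.addRight (1 : ℤ)).tsum_eq (fun k => w k * |f (k - 1)|)]
        exact tsum_congr fun j => by simp
      rw [e]
      calc (∑' j : ℤ, w (j + 1) * |f j|) ≤ ∑' j : ℤ, 2 * (w j * |f j|) := by
            refine Summable.tsum_le_tsum (fun j => ?_) hFm' (hf11.mul_left 2)
            have := mul_le_mul_of_nonneg_right (hwshiftm j) (abs_nonneg (f j))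
            linarith [this]
        _ = 2 * Sw := by rw [tsum_mul_left]
    have hFp_le : (∑' k : ℤ, w k * |f (k + 1)|) ≤ 2 * Sw := by
      have e : (∑' k : ℤ, w k * |f (k + 1)|) = ∑' j : ℤ, w (j - 1) * |f j| := by
        rw [← (Equiv.subRight (1 : ℤ)).tsum_eq (fun k => w k * |f (k + 1)|)]
        exact tsum_congr fun j => by simp
      rw [e]
      calc (∑' j : ℤ, w (j - 1) * |f j|) ≤ ∑' j : ℤ, 2 * (w j * |f j|) := by
            refine Summable.tsum_le_tsum (fun j => ?_) hFp' (hf11.mul_left 2)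
            have := mul_le_mul_of_nonneg_right (hwshiftp j) (abs_nonneg (f j))
            linarith [this]
        _ = 2 * Sw := by rw [tsum_mul_left]
    -- pointwise weighted bound
    have wkey : ∀ k : ℤ, w k * |Qop K f g k| ≤
        CK * Sg * (w k * |f (k - 1)| + 2 * (w k * |f k|) + w k * |f (k + 1)|) := by
      intro k
      have := mul_le_mul_of_nonneg_left (key k) (hw0 k)
      calc w k * |Qop K f g k| ≤ w k * (CK * Sg * (|f (k - 1)| + 2 * |f k| + |f (k + 1)|)) := this
        _ = CK * Sg * (w k * |f (k - 1)| + 2 * (w k * |f k|) + w k * |f (k + 1)|) := by ring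
    have hGsum0 : Summable fun k : ℤ =>
        w k * |f (k - 1)| + 2 * (w k * |f k|) + w k * |f (k + 1)| :=
      (hFm.add (hf11.mul_left 2)).add hFp
    have hGsum : Summable fun k : ℤ =>
        CK * Sg * (w k * |f (k - 1)| + 2 * (w k * |f k|) + w k * |f (k + 1)|) := hGsum0.mul_left _
    have hQsum : Summable fun k : ℤ => w k * |Qop K f g k| :=
      Summable.of_nonneg_of_le (fun k => mul_nonneg (hw0 _) (abs_nonneg _)) wkey hGsum
    have h1 : (∑' k : ℤ, w k * |Qop K f g k|) ≤
        ∑' k : ℤ, CK * Sg * (w k * |f (k - 1)| + 2 * (w k * |f k|) + w k * |f (k + 1)|) :=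
      Summable.tsum_le_tsum wkey hQsum hGsum
    have h2 : (∑' k : ℤ, CK * Sg * (w k * |f (k - 1)| + 2 * (w k * |f k|) + w k * |f (k + 1)|))
        = CK * Sg * ((∑' k : ℤ, w k * |f (k - 1)|) + 2 * Sw + ∑' k : ℤ, w k * |f (k + 1)|) := by
      rw [tsum_mul_left, Summable.tsum_add (hFm.add (hf11.mul_left 2)) hFp,
        Summable.tsum_add hFm (hf11.mul_left 2), tsum_mul_left]
    have hCS : 0 ≤ CK * Sg := mul_nonneg hCK.le hSg0
    calc (∑' k : ℤ, w k * |Qop K f g k|)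
        ≤ CK * Sg * ((∑' k : ℤ, w k * |f (k - 1)|) + 2 * Sw + ∑' k : ℤ, w k * |f (k + 1)|) :=
          h1.trans_eq h2
      _ ≤ CK * Sg * (2 * Sw + 2 * Sw + 2 * Sw) := by
          apply mul_le_mul_of_nonneg_left _ hCS
          linarith
      _ = 6 * CK * Sw * Sg := by ring
end

section
/- For a bounded kernel K and f, g ∈ ℓ¹(ℤ) (respectively ℓ_{1,1}(ℤ)), with Q(f) := Q(f,f), one has ‖Q(f) − Q(g)‖_X ≤ C_X C_K (‖f‖_X + ‖g‖_X) ‖f − g‖_X, where C_X = 4 for X = ℓ¹(ℤ) and C_X = 6 for X = ℓ_{1,1}(ℤ). In particular Q : X → X is Lipschitz continuous on bounded sets. -/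
open scoped BigOperators

private lemma abs8 (a b c d e f g h : ℝ) :
    |a + b - (c + d) - (e + f) + (g + h)| ≤ |a| + |b| + |c| + |d| + |e| + |f| + |g| + |h| := by
  rw [abs_le]
  constructor
  · linarith [neg_abs_le a, neg_abs_le b, le_abs_self c, le_abs_self d, le_abs_self e,
      le_abs_self f, neg_abs_le g, neg_abs_le h]
  · linarith [le_abs_self a, le_abs_self b, neg_abs_le c, neg_abs_le d, neg_abs_le e,
      neg_abs_le f, le_abs_self g, le_abs_self h]

private lemma summable_of_abs_le {u w : ℤ → ℝ} (hw : Summable w) (h : ∀ l, |u l| ≤ w l) :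
    Summable u := by
  have hn : Summable fun l => ‖u l‖ :=
    Summable.of_nonneg_of_le (fun l => norm_nonneg _)
      (fun l => by simpa [Real.norm_eq_abs] using h l) hw
  exact hn.of_norm

private lemma summable_shift_sub {u : ℤ → ℝ} (hu : Summable u) :
    Summable fun k => u (k - 1) :=
  (Equiv.subRight (1 : ℤ)).summable_iff.mpr hu

private lemma summable_shift_add {u : ℤ → ℝ} (hu : Summable u) :
    Summable fun k => u (k + 1) :=
  (Equiv.addRight (1 : ℤ)).summable_iff.mpr hu

private lemma tsum_shift_sub (u : ℤ → ℝ) : ∑' k : ℤ, u (k - 1) = ∑' k : ℤ, u k :=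
  (Equiv.subRight (1 : ℤ)).tsum_eq u

private lemma tsum_shift_add (u : ℤ → ℝ) : ∑' k : ℤ, u (k + 1) = ∑' k : ℤ, u k :=
  (Equiv.addRight (1 : ℤ)).tsum_eq u

private lemma wsub (k : ℤ) : 1 + |(k : ℝ)| ≤ 2 * (1 + |((k - 1 : ℤ) : ℝ)|) := by
  push_cast
  have h : |(k : ℝ)| ≤ |(k : ℝ) - 1| + 1 := by
    calc |(k : ℝ)| = |((k : ℝ) - 1) + 1| := by congr 1; ring
      _ ≤ |(k : ℝ) - 1| + |(1 : ℝ)| := abs_add_le _ _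
      _ = |(k : ℝ) - 1| + 1 := by rw [abs_one]
  linarith [abs_nonneg ((k : ℝ) - 1)]

private lemma wadd (k : ℤ) : 1 + |(k : ℝ)| ≤ 2 * (1 + |((k + 1 : ℤ) : ℝ)|) := by
  push_cast
  have h : |(k : ℝ)| ≤ |(k : ℝ) + 1| + 1 := by
    calc |(k : ℝ)| = |((k : ℝ) + 1) + (-1)| := by congr 1; ring
      _ ≤ |(k : ℝ) + 1| + |(-1 : ℝ)| := abs_add_le _ _
      _ = |(k : ℝ) + 1| + 1 := by norm_num
  linarith [abs_nonneg ((k : ℝ) + 1)]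

set_option maxHeartbeats 1600000 in
private lemma Q_pointwise (K : ℤ → ℤ → ℝ) (CK : ℝ) (hCK : 0 ≤ CK)
    (hK0 : ∀ k l, 0 ≤ K k l) (hKb : ∀ k l, K k l ≤ CK)
    (f g : ℤ → ℝ) (hf : Summable fun k => |f k|) (hg : Summable fun k => |g k|) (k : ℤ) :
    |Qop K f f k - Qop K g g k| ≤
      CK * (∑' l : ℤ, |f l|) *
          (|f (k - 1) - g (k - 1)| + 2 * |f k - g k| + |f (k + 1) - g (k + 1)|) +
        CK * (∑' l : ℤ, |f l - g l|) * (|g (k - 1)| + 2 * |g k| + |g (k + 1)|) := by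
  have hfs : Summable fun l => |f (l - 1)| := summable_shift_sub hf
  have hgs : Summable fun l => |g (l - 1)| := summable_shift_sub hg
  have hd : Summable fun l => |f l - g l| :=
    Summable.of_nonneg_of_le (fun l => abs_nonneg _) (fun l => abs_sub (f l) (g l)) (hf.add hg)
  have hds : Summable fun l => |f (l - 1) - g (l - 1)| := summable_shift_sub hd
  have gen : ∀ (A : ℤ → ℝ), (∀ l, 0 ≤ A l) → (∀ l, A l ≤ CK) →
      ∀ (u : ℤ → ℝ), (Summable fun l => |u l|) → ∀ c : ℝ,
        Summable fun l => A l * u l * c := by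
    intro A hA0 hA1 u hu c
    refine summable_of_abs_le (hu.mul_left (CK * |c|)) fun l => ?_
    rw [abs_mul, abs_mul, abs_of_nonneg (hA0 l)]
    calc A l * |u l| * |c| ≤ CK * |u l| * |c| :=
          mul_le_mul_of_nonneg_right
            (mul_le_mul_of_nonneg_right (hA1 l) (abs_nonneg _)) (abs_nonneg _)
      _ = CK * |c| * |u l| := by ring
  have hF : Summable fun l => K l (k - 1) * f l * f (k - 1) - K k (l - 1) * f k * f (l - 1)
      - K l k * f l * f k + K (k + 1) (l - 1) * f (k + 1) * f (l - 1) := by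
    have t1 := gen (fun l => K l (k - 1)) (fun l => hK0 _ _) (fun l => hKb _ _) f hf (f (k - 1))
    have t2 : Summable fun l => K k (l - 1) * f k * f (l - 1) :=
      (gen (fun l => K k (l - 1)) (fun l => hK0 _ _) (fun l => hKb _ _)
        (fun l => f (l - 1)) hfs (f k)).congr (fun l => by ring)
    have t3 := gen (fun l => K l k) (fun l => hK0 _ _) (fun l => hKb _ _) f hf (f k)
    have t4 : Summable fun l => K (k + 1) (l - 1) * f (k + 1) * f (l - 1) :=
      (gen (fun l => K (k + 1) (l - 1)) (fun l => hK0 _ _) (fun l => hKb _ _)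
        (fun l => f (l - 1)) hfs (f (k + 1))).congr (fun l => by ring)
    exact ((t1.sub t2).sub t3).add t4
  have hG : Summable fun l => K l (k - 1) * g l * g (k - 1) - K k (l - 1) * g k * g (l - 1)
      - K l k * g l * g k + K (k + 1) (l - 1) * g (k + 1) * g (l - 1) := by
    have t1 := gen (fun l => K l (k - 1)) (fun l => hK0 _ _) (fun l => hKb _ _) g hg (g (k - 1))
    have t2 : Summable fun l => K k (l - 1) * g k * g (l - 1) :=
      (gen (fun l => K k (l - 1)) (fun l => hK0 _ _) (fun l => hKb _ _)
        (fun l => g (l - 1)) hgs (g k)).congr (fun l => by ring)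
    have t3 := gen (fun l => K l k) (fun l => hK0 _ _) (fun l => hKb _ _) g hg (g k)
    have t4 : Summable fun l => K (k + 1) (l - 1) * g (k + 1) * g (l - 1) :=
      (gen (fun l => K (k + 1) (l - 1)) (fun l => hK0 _ _) (fun l => hKb _ _)
        (fun l => g (l - 1)) hgs (g (k + 1))).congr (fun l => by ring)
    exact ((t1.sub t2).sub t3).add t4
  have habsK : ∀ (a b : ℤ) (x y : ℝ), |K a b * x * y| ≤ CK * (|x| * |y|) := by
    intro a b x y
    rw [abs_mul, abs_mul, abs_of_nonneg (hK0 a b)]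
    calc K a b * |x| * |y| ≤ CK * |x| * |y| :=
          mul_le_mul_of_nonneg_right
            (mul_le_mul_of_nonneg_right (hKb a b) (abs_nonneg _)) (abs_nonneg _)
      _ = CK * (|x| * |y|) := by ring
  have hQ : Qop K f f k - Qop K g g k =
      ∑' l : ℤ, ((K l (k - 1) * f l * f (k - 1) - K k (l - 1) * f k * f (l - 1)
          - K l k * f l * f k + K (k + 1) (l - 1) * f (k + 1) * f (l - 1))
        - (K l (k - 1) * g l * g (k - 1) - K k (l - 1) * g k * g (l - 1)
          - K l k * g l * g k + K (k + 1) (l - 1) * g (k + 1) * g (l - 1))) := by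
    simp only [Qop]
    exact (Summable.tsum_sub hF hG).symm
  have hΦ : Summable fun l => (K l (k - 1) * f l * f (k - 1) - K k (l - 1) * f k * f (l - 1)
      - K l k * f l * f k + K (k + 1) (l - 1) * f (k + 1) * f (l - 1))
        - (K l (k - 1) * g l * g (k - 1) - K k (l - 1) * g k * g (l - 1)
          - K l k * g l * g k + K (k + 1) (l - 1) * g (k + 1) * g (l - 1)) := hF.sub hG
  have hpt : ∀ l : ℤ, |(K l (k - 1) * f l * f (k - 1) - K k (l - 1) * f k * f (l - 1)
      - K l k * f l * f k + K (k + 1) (l - 1) * f (k + 1) * f (l - 1))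
        - (K l (k - 1) * g l * g (k - 1) - K k (l - 1) * g k * g (l - 1)
          - K l k * g l * g k + K (k + 1) (l - 1) * g (k + 1) * g (l - 1))| ≤
      CK * (|f l| * (|f (k - 1) - g (k - 1)| + |f k - g k|)
        + |f l - g l| * (|g (k - 1)| + |g k|)
        + |f (l - 1)| * (|f k - g k| + |f (k + 1) - g (k + 1)|)
        + |f (l - 1) - g (l - 1)| * (|g k| + |g (k + 1)|)) := by
    intro l
    have e : (K l (k - 1) * f l * f (k - 1) - K k (l - 1) * f k * f (l - 1)
        - K l k * f l * f k + K (k + 1) (l - 1) * f (k + 1) * f (l - 1))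
          - (K l (k - 1) * g l * g (k - 1) - K k (l - 1) * g k * g (l - 1)
            - K l k * g l * g k + K (k + 1) (l - 1) * g (k + 1) * g (l - 1)) =
        (K l (k - 1) * f l * (f (k - 1) - g (k - 1)) + K l (k - 1) * (f l - g l) * g (k - 1))
        - (K k (l - 1) * (f k - g k) * f (l - 1) + K k (l - 1) * g k * (f (l - 1) - g (l - 1)))
        - (K l k * f l * (f k - g k) + K l k * (f l - g l) * g k)
        + (K (k + 1) (l - 1) * (f (k + 1) - g (k + 1)) * f (l - 1)
            + K (k + 1) (l - 1) * g (k + 1) * (f (l - 1) - g (l - 1))) := by ring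
    rw [e]
    have h0 := abs8 (K l (k - 1) * f l * (f (k - 1) - g (k - 1)))
      (K l (k - 1) * (f l - g l) * g (k - 1))
      (K k (l - 1) * (f k - g k) * f (l - 1))
      (K k (l - 1) * g k * (f (l - 1) - g (l - 1)))
      (K l k * f l * (f k - g k)) (K l k * (f l - g l) * g k)
      (K (k + 1) (l - 1) * (f (k + 1) - g (k + 1)) * f (l - 1))
      (K (k + 1) (l - 1) * g (k + 1) * (f (l - 1) - g (l - 1)))
    have B1 := habsK l (k - 1) (f l) (f (k - 1) - g (k - 1))
    have B2 := habsK l (k - 1) (f l - g l) (g (k - 1))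
    have B3 := habsK k (l - 1) (f k - g k) (f (l - 1))
    have B4 := habsK k (l - 1) (g k) (f (l - 1) - g (l - 1))
    have B5 := habsK l k (f l) (f k - g k)
    have B6 := habsK l k (f l - g l) (g k)
    have B7 := habsK (k + 1) (l - 1) (f (k + 1) - g (k + 1)) (f (l - 1))
    have B8 := habsK (k + 1) (l - 1) (g (k + 1)) (f (l - 1) - g (l - 1))
    linarith
  have s1 : Summable fun l => |f l| * (|f (k - 1) - g (k - 1)| + |f k - g k|) := hf.mul_right _
  have s2 : Summable fun l => |f l - g l| * (|g (k - 1)| + |g k|) := hd.mul_right _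
  have s3 : Summable fun l => |f (l - 1)| * (|f k - g k| + |f (k + 1) - g (k + 1)|) :=
    hfs.mul_right _
  have s4 : Summable fun l => |f (l - 1) - g (l - 1)| * (|g k| + |g (k + 1)|) := hds.mul_right _
  have hΨ : Summable fun l => CK * (|f l| * (|f (k - 1) - g (k - 1)| + |f k - g k|)
      + |f l - g l| * (|g (k - 1)| + |g k|)
      + |f (l - 1)| * (|f k - g k| + |f (k + 1) - g (k + 1)|)
      + |f (l - 1) - g (l - 1)| * (|g k| + |g (k + 1)|)) :=
    (((s1.add s2).add s3).add s4).mul_left CK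
  have e3 : ∑' l : ℤ, |f (l - 1)| = ∑' l : ℤ, |f l| := tsum_shift_sub (fun m => |f m|)
  have e4 : ∑' l : ℤ, |f (l - 1) - g (l - 1)| = ∑' l : ℤ, |f l - g l| :=
    tsum_shift_sub (fun m => |f m - g m|)
  calc |Qop K f f k - Qop K g g k|
      = |∑' l : ℤ, ((K l (k - 1) * f l * f (k - 1) - K k (l - 1) * f k * f (l - 1)
          - K l k * f l * f k + K (k + 1) (l - 1) * f (k + 1) * f (l - 1))
        - (K l (k - 1) * g l * g (k - 1) - K k (l - 1) * g k * g (l - 1)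
          - K l k * g l * g k + K (k + 1) (l - 1) * g (k + 1) * g (l - 1)))| := by rw [hQ]
    _ ≤ ∑' l : ℤ, |(K l (k - 1) * f l * f (k - 1) - K k (l - 1) * f k * f (l - 1)
          - K l k * f l * f k + K (k + 1) (l - 1) * f (k + 1) * f (l - 1))
        - (K l (k - 1) * g l * g (k - 1) - K k (l - 1) * g k * g (l - 1)
          - K l k * g l * g k + K (k + 1) (l - 1) * g (k + 1) * g (l - 1))| := by
        have hn : Summable fun l => ‖(K l (k - 1) * f l * f (k - 1)
            - K k (l - 1) * f k * f (l - 1)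
            - K l k * f l * f k + K (k + 1) (l - 1) * f (k + 1) * f (l - 1))
          - (K l (k - 1) * g l * g (k - 1) - K k (l - 1) * g k * g (l - 1)
            - K l k * g l * g k + K (k + 1) (l - 1) * g (k + 1) * g (l - 1))‖ := by
          simpa [Real.norm_eq_abs] using hΦ.abs
        simpa [Real.norm_eq_abs] using norm_tsum_le_tsum_norm hn
    _ ≤ ∑' l : ℤ, CK * (|f l| * (|f (k - 1) - g (k - 1)| + |f k - g k|)
        + |f l - g l| * (|g (k - 1)| + |g k|)
        + |f (l - 1)| * (|f k - g k| + |f (k + 1) - g (k + 1)|)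
        + |f (l - 1) - g (l - 1)| * (|g k| + |g (k + 1)|)) :=
        Summable.tsum_le_tsum hpt hΦ.abs hΨ
    _ = CK * ((∑' l : ℤ, |f l|) * (|f (k - 1) - g (k - 1)| + |f k - g k|)
        + (∑' l : ℤ, |f l - g l|) * (|g (k - 1)| + |g k|)
        + (∑' l : ℤ, |f (l - 1)|) * (|f k - g k| + |f (k + 1) - g (k + 1)|)
        + (∑' l : ℤ, |f (l - 1) - g (l - 1)|) * (|g k| + |g (k + 1)|)) := by
        rw [tsum_mul_left, Summable.tsum_add ((s1.add s2).add s3) s4, Summable.tsum_add (s1.add s2) s3,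
          Summable.tsum_add s1 s2, tsum_mul_right, tsum_mul_right, tsum_mul_right, tsum_mul_right]
    _ = CK * (∑' l : ℤ, |f l|) *
          (|f (k - 1) - g (k - 1)| + 2 * |f k - g k| + |f (k + 1) - g (k + 1)|) +
        CK * (∑' l : ℤ, |f l - g l|) * (|g (k - 1)| + 2 * |g k| + |g (k + 1)|) := by
        rw [e3, e4]; ring

private lemma weighted_shift_sub {u : ℤ → ℝ} (hu0 : ∀ k, 0 ≤ u k)
    (hu : Summable fun k : ℤ => (1 + |(k : ℝ)|) * u k) :
    Summable (fun k : ℤ => (1 + |(k : ℝ)|) * u (k - 1)) ∧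
      ∑' k : ℤ, (1 + |(k : ℝ)|) * u (k - 1) ≤ 2 * ∑' k : ℤ, (1 + |(k : ℝ)|) * u k := by
  have hs : Summable fun k : ℤ => (1 + |((k - 1 : ℤ) : ℝ)|) * u (k - 1) :=
    summable_shift_sub hu
  have hle : ∀ k : ℤ, (1 + |(k : ℝ)|) * u (k - 1) ≤
      2 * ((1 + |((k - 1 : ℤ) : ℝ)|) * u (k - 1)) := by
    intro k
    have := mul_le_mul_of_nonneg_right (wsub k) (hu0 (k - 1))
    linarith
  have hsum : Summable (fun k : ℤ => (1 + |(k : ℝ)|) * u (k - 1)) :=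
    Summable.of_nonneg_of_le (fun k => mul_nonneg (by positivity) (hu0 _)) hle (hs.mul_left 2)
  refine ⟨hsum, ?_⟩
  have e : ∑' k : ℤ, (1 + |((k - 1 : ℤ) : ℝ)|) * u (k - 1) =
      ∑' k : ℤ, (1 + |(k : ℝ)|) * u k := tsum_shift_sub (fun m : ℤ => (1 + |(m : ℝ)|) * u m)
  calc ∑' k : ℤ, (1 + |(k : ℝ)|) * u (k - 1)
      ≤ ∑' k : ℤ, 2 * ((1 + |((k - 1 : ℤ) : ℝ)|) * u (k - 1)) :=
        Summable.tsum_le_tsum hle hsum (hs.mul_left 2)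
    _ = 2 * ∑' k : ℤ, (1 + |((k - 1 : ℤ) : ℝ)|) * u (k - 1) := tsum_mul_left
    _ = 2 * ∑' k : ℤ, (1 + |(k : ℝ)|) * u k := by rw [e]

private lemma weighted_shift_add {u : ℤ → ℝ} (hu0 : ∀ k, 0 ≤ u k)
    (hu : Summable fun k : ℤ => (1 + |(k : ℝ)|) * u k) :
    Summable (fun k : ℤ => (1 + |(k : ℝ)|) * u (k + 1)) ∧
      ∑' k : ℤ, (1 + |(k : ℝ)|) * u (k + 1) ≤ 2 * ∑' k : ℤ, (1 + |(k : ℝ)|) * u k := by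
  have hs : Summable fun k : ℤ => (1 + |((k + 1 : ℤ) : ℝ)|) * u (k + 1) :=
    summable_shift_add hu
  have hle : ∀ k : ℤ, (1 + |(k : ℝ)|) * u (k + 1) ≤
      2 * ((1 + |((k + 1 : ℤ) : ℝ)|) * u (k + 1)) := by
    intro k
    have := mul_le_mul_of_nonneg_right (wadd k) (hu0 (k + 1))
    linarith
  have hsum : Summable (fun k : ℤ => (1 + |(k : ℝ)|) * u (k + 1)) :=
    Summable.of_nonneg_of_le (fun k => mul_nonneg (by positivity) (hu0 _)) hle (hs.mul_left 2)
  refine ⟨hsum, ?_⟩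
  have e : ∑' k : ℤ, (1 + |((k + 1 : ℤ) : ℝ)|) * u (k + 1) =
      ∑' k : ℤ, (1 + |(k : ℝ)|) * u k := tsum_shift_add (fun m : ℤ => (1 + |(m : ℝ)|) * u m)
  calc ∑' k : ℤ, (1 + |(k : ℝ)|) * u (k + 1)
      ≤ ∑' k : ℤ, 2 * ((1 + |((k + 1 : ℤ) : ℝ)|) * u (k + 1)) :=
        Summable.tsum_le_tsum hle hsum (hs.mul_left 2)
    _ = 2 * ∑' k : ℤ, (1 + |((k + 1 : ℤ) : ℝ)|) * u (k + 1) := tsum_mul_left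
    _ = 2 * ∑' k : ℤ, (1 + |(k : ℝ)|) * u k := by rw [e]

set_option maxHeartbeats 1600000 in
theorem Q_lipschitz_on_bounded_sets (K : ℤ → ℤ → ℝ) (CK : ℝ) (hCK : 0 < CK)
    (hK0 : ∀ k l, 0 ≤ K k l) (hKb : ∀ k l, K k l ≤ CK)
    (f g : ℤ → ℝ) (hf : Summable fun k => |f k|) (hg : Summable fun k => |g k|) :
    (∑' k : ℤ, |Qop K f f k - Qop K g g k| ≤
        4 * CK * ((∑' k : ℤ, |f k|) + ∑' k : ℤ, |g k|) * ∑' k : ℤ, |f k - g k|) ∧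
      ((Summable fun k : ℤ => (1 + |(k : ℝ)|) * |f k|) →
        (Summable fun k : ℤ => (1 + |(k : ℝ)|) * |g k|) →
        ∑' k : ℤ, (1 + |(k : ℝ)|) * |Qop K f f k - Qop K g g k| ≤
          6 * CK * ((∑' k : ℤ, (1 + |(k : ℝ)|) * |f k|) + ∑' k : ℤ, (1 + |(k : ℝ)|) * |g k|) *
            ∑' k : ℤ, (1 + |(k : ℝ)|) * |f k - g k|) := by
  have hCK' : 0 ≤ CK := hCK.le
  have hd : Summable fun k => |f k - g k| :=
    Summable.of_nonneg_of_le (fun k => abs_nonneg _) (fun k => abs_sub (f k) (g k)) (hf.add hg)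
  have hdm : Summable fun k => |f (k - 1) - g (k - 1)| := summable_shift_sub hd
  have hdp : Summable fun k => |f (k + 1) - g (k + 1)| := summable_shift_add hd
  have hgm : Summable fun k => |g (k - 1)| := summable_shift_sub hg
  have hgp : Summable fun k => |g (k + 1)| := summable_shift_add hg
  have hpt := Q_pointwise K CK hCK' hK0 hKb f g hf hg
  have hA : Summable fun k : ℤ =>
      |f (k - 1) - g (k - 1)| + 2 * |f k - g k| + |f (k + 1) - g (k + 1)| :=
    (hdm.add (hd.mul_left 2)).add hdp
  have hB : Summable fun k : ℤ => |g (k - 1)| + 2 * |g k| + |g (k + 1)| :=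
    (hgm.add (hg.mul_left 2)).add hgp
  have hP : Summable fun k : ℤ =>
      CK * (∑' l : ℤ, |f l|) *
          (|f (k - 1) - g (k - 1)| + 2 * |f k - g k| + |f (k + 1) - g (k + 1)|) +
        CK * (∑' l : ℤ, |f l - g l|) * (|g (k - 1)| + 2 * |g k| + |g (k + 1)|) :=
    (hA.mul_left _).add (hB.mul_left _)
  have hQs : Summable fun k : ℤ => |Qop K f f k - Qop K g g k| :=
    Summable.of_nonneg_of_le (fun k => abs_nonneg _) hpt hP
  have edm : ∑' k : ℤ, |f (k - 1) - g (k - 1)| = ∑' k : ℤ, |f k - g k| :=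
    tsum_shift_sub (fun m => |f m - g m|)
  have edp : ∑' k : ℤ, |f (k + 1) - g (k + 1)| = ∑' k : ℤ, |f k - g k| :=
    tsum_shift_add (fun m => |f m - g m|)
  have egm : ∑' k : ℤ, |g (k - 1)| = ∑' k : ℤ, |g k| := tsum_shift_sub (fun m => |g m|)
  have egp : ∑' k : ℤ, |g (k + 1)| = ∑' k : ℤ, |g k| := tsum_shift_add (fun m => |g m|)
  have hAsum : ∑' k : ℤ,
      (|f (k - 1) - g (k - 1)| + 2 * |f k - g k| + |f (k + 1) - g (k + 1)|) =
      4 * ∑' k : ℤ, |f k - g k| := by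
    rw [Summable.tsum_add (hdm.add (hd.mul_left 2)) hdp, Summable.tsum_add hdm (hd.mul_left 2), tsum_mul_left,
      edm, edp]
    ring
  have hBsum : ∑' k : ℤ, (|g (k - 1)| + 2 * |g k| + |g (k + 1)|) = 4 * ∑' k : ℤ, |g k| := by
    rw [Summable.tsum_add (hgm.add (hg.mul_left 2)) hgp, Summable.tsum_add hgm (hg.mul_left 2), tsum_mul_left,
      egm, egp]
    ring
  constructor
  · calc ∑' k : ℤ, |Qop K f f k - Qop K g g k|
        ≤ ∑' k : ℤ, (CK * (∑' l : ℤ, |f l|) *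
            (|f (k - 1) - g (k - 1)| + 2 * |f k - g k| + |f (k + 1) - g (k + 1)|) +
          CK * (∑' l : ℤ, |f l - g l|) * (|g (k - 1)| + 2 * |g k| + |g (k + 1)|)) :=
          Summable.tsum_le_tsum hpt hQs hP
      _ = CK * (∑' l : ℤ, |f l|) * (∑' k : ℤ,
            (|f (k - 1) - g (k - 1)| + 2 * |f k - g k| + |f (k + 1) - g (k + 1)|)) +
          CK * (∑' l : ℤ, |f l - g l|) *
            (∑' k : ℤ, (|g (k - 1)| + 2 * |g k| + |g (k + 1)|)) := by
          rw [Summable.tsum_add (hA.mul_left _) (hB.mul_left _), tsum_mul_left, tsum_mul_left]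
      _ = 4 * CK * ((∑' k : ℤ, |f k|) + ∑' k : ℤ, |g k|) * ∑' k : ℤ, |f k - g k| := by
          rw [hAsum, hBsum]; ring
  · intro hf1 hg1
    have hd1 : Summable fun k : ℤ => (1 + |(k : ℝ)|) * |f k - g k| := by
      refine Summable.of_nonneg_of_le (fun k => mul_nonneg (by positivity) (abs_nonneg _))
        (fun k => ?_) (hf1.add hg1)
      have h1 : |f k - g k| ≤ |f k| + |g k| := abs_sub _ _
      have h2 : (0 : ℝ) ≤ 1 + |(k : ℝ)| := by positivity
      nlinarith
    obtain ⟨hWdm, hWdm_le⟩ := weighted_shift_sub (fun m => abs_nonneg (f m - g m)) hd1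
    obtain ⟨hWdp, hWdp_le⟩ := weighted_shift_add (fun m => abs_nonneg (f m - g m)) hd1
    obtain ⟨hWgm, hWgm_le⟩ := weighted_shift_sub (fun m => abs_nonneg (g m)) hg1
    obtain ⟨hWgp, hWgp_le⟩ := weighted_shift_add (fun m => abs_nonneg (g m)) hg1
    have hWA : Summable fun k : ℤ => (1 + |(k : ℝ)|) *
        (|f (k - 1) - g (k - 1)| + 2 * |f k - g k| + |f (k + 1) - g (k + 1)|) :=
      ((hWdm.add (hd1.mul_left 2)).add hWdp).congr (fun k => by ring)
    have hWB : Summable fun k : ℤ => (1 + |(k : ℝ)|) *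
        (|g (k - 1)| + 2 * |g k| + |g (k + 1)|) :=
      ((hWgm.add (hg1.mul_left 2)).add hWgp).congr (fun k => by ring)
    have hWA_le : ∑' k : ℤ, (1 + |(k : ℝ)|) *
        (|f (k - 1) - g (k - 1)| + 2 * |f k - g k| + |f (k + 1) - g (k + 1)|) ≤
        6 * ∑' k : ℤ, (1 + |(k : ℝ)|) * |f k - g k| := by
      calc ∑' k : ℤ, (1 + |(k : ℝ)|) *
            (|f (k - 1) - g (k - 1)| + 2 * |f k - g k| + |f (k + 1) - g (k + 1)|)
          = ∑' k : ℤ, ((1 + |(k : ℝ)|) * |f (k - 1) - g (k - 1)| +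
              2 * ((1 + |(k : ℝ)|) * |f k - g k|) +
              (1 + |(k : ℝ)|) * |f (k + 1) - g (k + 1)|) := tsum_congr (fun k => by ring)
        _ = (∑' k : ℤ, (1 + |(k : ℝ)|) * |f (k - 1) - g (k - 1)|) +
            (∑' k : ℤ, 2 * ((1 + |(k : ℝ)|) * |f k - g k|)) +
            ∑' k : ℤ, (1 + |(k : ℝ)|) * |f (k + 1) - g (k + 1)| := by
            rw [Summable.tsum_add (hWdm.add (hd1.mul_left 2)) hWdp, Summable.tsum_add hWdm (hd1.mul_left 2)]
        _ = (∑' k : ℤ, (1 + |(k : ℝ)|) * |f (k - 1) - g (k - 1)|) +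
            2 * (∑' k : ℤ, (1 + |(k : ℝ)|) * |f k - g k|) +
            ∑' k : ℤ, (1 + |(k : ℝ)|) * |f (k + 1) - g (k + 1)| := by rw [tsum_mul_left]
        _ ≤ 2 * (∑' k : ℤ, (1 + |(k : ℝ)|) * |f k - g k|) +
            2 * (∑' k : ℤ, (1 + |(k : ℝ)|) * |f k - g k|) +
            2 * (∑' k : ℤ, (1 + |(k : ℝ)|) * |f k - g k|) := by
            have := hWdm_le; have := hWdp_le; linarith
        _ = 6 * ∑' k : ℤ, (1 + |(k : ℝ)|) * |f k - g k| := by ring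
    have hWB_le : ∑' k : ℤ, (1 + |(k : ℝ)|) * (|g (k - 1)| + 2 * |g k| + |g (k + 1)|) ≤
        6 * ∑' k : ℤ, (1 + |(k : ℝ)|) * |g k| := by
      calc ∑' k : ℤ, (1 + |(k : ℝ)|) * (|g (k - 1)| + 2 * |g k| + |g (k + 1)|)
          = ∑' k : ℤ, ((1 + |(k : ℝ)|) * |g (k - 1)| + 2 * ((1 + |(k : ℝ)|) * |g k|) +
              (1 + |(k : ℝ)|) * |g (k + 1)|) := tsum_congr (fun k => by ring)
        _ = (∑' k : ℤ, (1 + |(k : ℝ)|) * |g (k - 1)|) +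
            (∑' k : ℤ, 2 * ((1 + |(k : ℝ)|) * |g k|)) +
            ∑' k : ℤ, (1 + |(k : ℝ)|) * |g (k + 1)| := by
            rw [Summable.tsum_add (hWgm.add (hg1.mul_left 2)) hWgp, Summable.tsum_add hWgm (hg1.mul_left 2)]
        _ = (∑' k : ℤ, (1 + |(k : ℝ)|) * |g (k - 1)|) +
            2 * (∑' k : ℤ, (1 + |(k : ℝ)|) * |g k|) +
            ∑' k : ℤ, (1 + |(k : ℝ)|) * |g (k + 1)| := by rw [tsum_mul_left]
        _ ≤ 2 * (∑' k : ℤ, (1 + |(k : ℝ)|) * |g k|) +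
            2 * (∑' k : ℤ, (1 + |(k : ℝ)|) * |g k|) +
            2 * (∑' k : ℤ, (1 + |(k : ℝ)|) * |g k|) := by
            have := hWgm_le; have := hWgp_le; linarith
        _ = 6 * ∑' k : ℤ, (1 + |(k : ℝ)|) * |g k| := by ring
    have hptw : ∀ k : ℤ, (1 + |(k : ℝ)|) * |Qop K f f k - Qop K g g k| ≤
        CK * (∑' l : ℤ, |f l|) * ((1 + |(k : ℝ)|) *
          (|f (k - 1) - g (k - 1)| + 2 * |f k - g k| + |f (k + 1) - g (k + 1)|)) +
        CK * (∑' l : ℤ, |f l - g l|) * ((1 + |(k : ℝ)|) *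
          (|g (k - 1)| + 2 * |g k| + |g (k + 1)|)) := by
      intro k
      have h2 : (0 : ℝ) ≤ 1 + |(k : ℝ)| := by positivity
      have := mul_le_mul_of_nonneg_left (hpt k) h2
      linarith
    have hP2 : Summable fun k : ℤ =>
        CK * (∑' l : ℤ, |f l|) * ((1 + |(k : ℝ)|) *
          (|f (k - 1) - g (k - 1)| + 2 * |f k - g k| + |f (k + 1) - g (k + 1)|)) +
        CK * (∑' l : ℤ, |f l - g l|) * ((1 + |(k : ℝ)|) *
          (|g (k - 1)| + 2 * |g k| + |g (k + 1)|)) :=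
      (hWA.mul_left _).add (hWB.mul_left _)
    have hQw : Summable fun k : ℤ => (1 + |(k : ℝ)|) * |Qop K f f k - Qop K g g k| :=
      Summable.of_nonneg_of_le (fun k => mul_nonneg (by positivity) (abs_nonneg _)) hptw hP2
    have hSf0 : (0 : ℝ) ≤ ∑' l : ℤ, |f l| := tsum_nonneg fun _ => abs_nonneg _
    have hSd0 : (0 : ℝ) ≤ ∑' l : ℤ, |f l - g l| := tsum_nonneg fun _ => abs_nonneg _
    have hWf0 : (0 : ℝ) ≤ ∑' k : ℤ, (1 + |(k : ℝ)|) * |f k| :=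
      tsum_nonneg fun k => mul_nonneg (by positivity) (abs_nonneg _)
    have hWg0 : (0 : ℝ) ≤ ∑' k : ℤ, (1 + |(k : ℝ)|) * |g k| :=
      tsum_nonneg fun k => mul_nonneg (by positivity) (abs_nonneg _)
    have hWd0 : (0 : ℝ) ≤ ∑' k : ℤ, (1 + |(k : ℝ)|) * |f k - g k| :=
      tsum_nonneg fun k => mul_nonneg (by positivity) (abs_nonneg _)
    have hSfWf : (∑' l : ℤ, |f l|) ≤ ∑' k : ℤ, (1 + |(k : ℝ)|) * |f k| := by
      refine Summable.tsum_le_tsum (fun k => ?_) hf hf1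
      have : (1 : ℝ) ≤ 1 + |(k : ℝ)| := by linarith [abs_nonneg ((k : ℝ))]
      exact le_mul_of_one_le_left (abs_nonneg _) this
    have hSdWd : (∑' l : ℤ, |f l - g l|) ≤ ∑' k : ℤ, (1 + |(k : ℝ)|) * |f k - g k| := by
      refine Summable.tsum_le_tsum (fun k => ?_) hd hd1
      have : (1 : ℝ) ≤ 1 + |(k : ℝ)| := by linarith [abs_nonneg ((k : ℝ))]
      exact le_mul_of_one_le_left (abs_nonneg _) this
    calc ∑' k : ℤ, (1 + |(k : ℝ)|) * |Qop K f f k - Qop K g g k|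
        ≤ ∑' k : ℤ, (CK * (∑' l : ℤ, |f l|) * ((1 + |(k : ℝ)|) *
            (|f (k - 1) - g (k - 1)| + 2 * |f k - g k| + |f (k + 1) - g (k + 1)|)) +
          CK * (∑' l : ℤ, |f l - g l|) * ((1 + |(k : ℝ)|) *
            (|g (k - 1)| + 2 * |g k| + |g (k + 1)|))) := Summable.tsum_le_tsum hptw hQw hP2
      _ = CK * (∑' l : ℤ, |f l|) * (∑' k : ℤ, (1 + |(k : ℝ)|) *
            (|f (k - 1) - g (k - 1)| + 2 * |f k - g k| + |f (k + 1) - g (k + 1)|)) +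
          CK * (∑' l : ℤ, |f l - g l|) * (∑' k : ℤ, (1 + |(k : ℝ)|) *
            (|g (k - 1)| + 2 * |g k| + |g (k + 1)|)) := by
          rw [Summable.tsum_add (hWA.mul_left _) (hWB.mul_left _), tsum_mul_left, tsum_mul_left]
      _ ≤ CK * (∑' l : ℤ, |f l|) * (6 * ∑' k : ℤ, (1 + |(k : ℝ)|) * |f k - g k|) +
          CK * (∑' l : ℤ, |f l - g l|) * (6 * ∑' k : ℤ, (1 + |(k : ℝ)|) * |g k|) :=
          add_le_add (mul_le_mul_of_nonneg_left hWA_le (mul_nonneg hCK' hSf0))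
            (mul_le_mul_of_nonneg_left hWB_le (mul_nonneg hCK' hSd0))
      _ ≤ CK * (∑' k : ℤ, (1 + |(k : ℝ)|) * |f k|) *
            (6 * ∑' k : ℤ, (1 + |(k : ℝ)|) * |f k - g k|) +
          CK * (∑' k : ℤ, (1 + |(k : ℝ)|) * |f k - g k|) *
            (6 * ∑' k : ℤ, (1 + |(k : ℝ)|) * |g k|) :=
          add_le_add
            (mul_le_mul_of_nonneg_right (mul_le_mul_of_nonneg_left hSfWf hCK')
              (by linarith))
            (mul_le_mul_of_nonneg_right (mul_le_mul_of_nonneg_left hSdWd hCK')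
              (by linarith))
      _ = 6 * CK * ((∑' k : ℤ, (1 + |(k : ℝ)|) * |f k|) + ∑' k : ℤ, (1 + |(k : ℝ)|) * |g k|) *
            ∑' k : ℤ, (1 + |(k : ℝ)|) * |f k - g k| := by ring
end

section
/- For a bounded kernel K and any g ∈ ℓ¹(ℤ), the total mass of the collision term vanishes: ∑_{k∈ℤ} Q(g)(k) = 0. Moreover, for any g ∈ ℓ_{1,1}(ℤ), the total charge of the collision term vanishes: ∑_{k∈ℤ} k·Q(g)(k) = 0. -/
open scoped BigOperators

private lemma sumdom {u v : ℤ → ℝ} (c : ℝ) (hu : Summable u) (hv : Summable v)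
    (hu0 : ∀ k, 0 ≤ u k) (hv0 : ∀ k, 0 ≤ v k) {f : ℤ × ℤ → ℝ}
    (hf : ∀ p, |f p| ≤ c * (u p.1 * v p.2)) : Summable f :=
  (Summable.of_nonneg_of_le (fun p => abs_nonneg _) hf
    (((hu.mul_of_nonneg hv hu0 hv0).mul_left c))).of_abs

private def eA : ℤ × ℤ ≃ ℤ × ℤ :=
  ⟨fun p => (p.2, p.1 - 1), fun p => (p.2 + 1, p.1), by rintro ⟨a, b⟩; simp,
    by rintro ⟨a, b⟩; simp⟩

private def eB : ℤ × ℤ ≃ ℤ × ℤ :=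
  ⟨fun p => (p.1, p.2 - 1), fun p => (p.1, p.2 + 1), by rintro ⟨a, b⟩; simp,
    by rintro ⟨a, b⟩; simp⟩

private def eC : ℤ × ℤ ≃ ℤ × ℤ :=
  ⟨fun p => (p.2, p.1), fun p => (p.2, p.1), by rintro ⟨a, b⟩; simp,
    by rintro ⟨a, b⟩; simp⟩

private def eD : ℤ × ℤ ≃ ℤ × ℤ :=
  ⟨fun p => (p.1 + 1, p.2 - 1), fun p => (p.1 - 1, p.2 + 1), by rintro ⟨a, b⟩; simp,
    by rintro ⟨a, b⟩; simp⟩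

private lemma abs_le_one_add_abs_sub (x : ℝ) : |x| ≤ 1 + |x - 1| := by
  calc |x| = |x - 1 + 1| := by rw [sub_add_cancel]
    _ ≤ |x - 1| + |(1 : ℝ)| := abs_add_le _ _
    _ = 1 + |x - 1| := by simp [add_comm]

private lemma abs_le_one_add_abs_add (x : ℝ) : |x| ≤ 1 + |x + 1| := by
  calc |x| = |x + 1 + -1| := by ring_nf
    _ ≤ |x + 1| + |(-1 : ℝ)| := abs_add_le _ _
    _ = 1 + |x + 1| := by simp [add_comm]

set_option maxHeartbeats 4000000 in
theorem total_mass_and_charge_of_Q_vanish (K : ℤ → ℤ → ℝ) (CK : ℝ) (hCK : 0 < CK)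
    (hK0 : ∀ k l, 0 ≤ K k l) (hKb : ∀ k l, K k l ≤ CK)
    (g : ℤ → ℝ) (hg : Summable fun k => |g k|) :
    (∑' k : ℤ, Qop K g g k = 0) ∧
      ((Summable fun k : ℤ => (1 + |(k : ℝ)|) * |g k|) →
        ∑' k : ℤ, (k : ℝ) * Qop K g g k = 0) := by
  set G : ℤ → ℝ := fun k => |g k| with hGdef
  have hG : Summable G := hg
  have hG0 : ∀ k, 0 ≤ G k := fun k => abs_nonneg _
  set Fp : ℤ × ℤ → ℝ := fun p => K p.1 p.2 * g p.1 * g p.2 with hFdef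
  have key : ∀ a b : ℤ, |K a b * g a * g b| ≤ CK * (|g a| * |g b|) := by
    intro a b
    rw [abs_mul, abs_mul, abs_of_nonneg (hK0 a b), mul_assoc]
    exact mul_le_mul_of_nonneg_right (hKb a b) (mul_nonneg (abs_nonneg _) (abs_nonneg _))
  have hF : Summable Fp :=
    sumdom CK hG hG hG0 hG0 (fun p => key p.1 p.2)
  have hFA : Summable (fun p : ℤ × ℤ => Fp (eA p)) := eA.summable_iff.mpr hF
  have hFB : Summable (fun p : ℤ × ℤ => Fp (eB p)) := eB.summable_iff.mpr hF
  have hFC : Summable (fun p : ℤ × ℤ => Fp (eC p)) := eC.summable_iff.mpr hF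
  have hFD : Summable (fun p : ℤ × ℤ => Fp (eD p)) := eD.summable_iff.mpr hF
  have hQop : ∀ k : ℤ, Qop K g g k
      = ∑' l : ℤ, (Fp (eA (k, l)) - Fp (eB (k, l)) - Fp (eC (k, l)) + Fp (eD (k, l))) := by
    intro k
    simp only [Qop, hFdef, eA, eB, eC, eD, Equiv.coe_fn_mk]
  constructor
  · have hh : Summable (fun p : ℤ × ℤ => Fp (eA p) - Fp (eB p) - Fp (eC p) + Fp (eD p)) :=
      ((hFA.sub hFB).sub hFC).add hFD
    calc ∑' k : ℤ, Qop K g g k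
        = ∑' (k : ℤ) (l : ℤ), (Fp (eA (k, l)) - Fp (eB (k, l)) - Fp (eC (k, l)) + Fp (eD (k, l))) :=
          tsum_congr hQop
      _ = ∑' p : ℤ × ℤ, (Fp (eA p) - Fp (eB p) - Fp (eC p) + Fp (eD p)) := (Summable.tsum_prod hh).symm
      _ = ((∑' p : ℤ × ℤ, Fp (eA p)) - ∑' p : ℤ × ℤ, Fp (eB p)) - (∑' p : ℤ × ℤ, Fp (eC p))
          + ∑' p : ℤ × ℤ, Fp (eD p) := by
          rw [Summable.tsum_add ((hFA.sub hFB).sub hFC) hFD, Summable.tsum_sub (hFA.sub hFB) hFC,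
            Summable.tsum_sub hFA hFB]
      _ = 0 := by
          rw [eA.tsum_eq Fp, eB.tsum_eq Fp, eC.tsum_eq Fp, eD.tsum_eq Fp]; ring
  · intro hWsum
    set W : ℤ → ℝ := fun k => (1 + |(k : ℝ)|) * |g k| with hWdef
    have hW : Summable W := hWsum
    have hW0 : ∀ k, 0 ≤ W k := fun k => by positivity
    have hWm : Summable (fun k : ℤ => W (k - 1)) := (Equiv.subRight (1 : ℤ)).summable_iff.mpr hW
    have hWp : Summable (fun k : ℤ => W (k + 1)) := (Equiv.addRight (1 : ℤ)).summable_iff.mpr hW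
    have hGm : Summable (fun k : ℤ => G (k - 1)) := (Equiv.subRight (1 : ℤ)).summable_iff.mpr hG
    -- summability of the four weighted pieces
    have hw1 : Summable (fun p : ℤ × ℤ => (p.1 : ℝ) * Fp (eA p)) := by
      apply sumdom CK hWm hG (fun k => hW0 _) hG0
      rintro ⟨k, l⟩
      have h1 : |((k : ℤ) : ℝ)| ≤ 1 + |((k - 1 : ℤ) : ℝ)| := by
        push_cast; exact abs_le_one_add_abs_sub _
      calc |(k : ℝ) * Fp (eA (k, l))| = |(k : ℝ)| * |Fp (eA (k, l))| := abs_mul _ _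
        _ ≤ (1 + |((k - 1 : ℤ) : ℝ)|) * (CK * (|g l| * |g (k - 1)|)) :=
            mul_le_mul h1 (key l (k - 1)) (abs_nonneg _)
              (by positivity)
        _ = CK * (W (k - 1) * G l) := by simp only [hWdef, hGdef]; ring
    have hw2 : Summable (fun p : ℤ × ℤ => (p.1 : ℝ) * Fp (eB p)) := by
      apply sumdom CK hW hGm (fun k => hW0 _) (fun k => hG0 _)
      rintro ⟨k, l⟩
      have h1 : |((k : ℤ) : ℝ)| ≤ 1 + |((k : ℤ) : ℝ)| := by
        nlinarith [abs_nonneg ((k : ℝ))]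
      calc |(k : ℝ) * Fp (eB (k, l))| = |(k : ℝ)| * |Fp (eB (k, l))| := abs_mul _ _
        _ ≤ (1 + |((k : ℤ) : ℝ)|) * (CK * (|g k| * |g (l - 1)|)) :=
            mul_le_mul h1 (key k (l - 1)) (abs_nonneg _) (by positivity)
        _ = CK * (W k * G (l - 1)) := by simp only [hWdef, hGdef]; ring
    have hw3 : Summable (fun p : ℤ × ℤ => (p.1 : ℝ) * Fp (eC p)) := by
      apply sumdom CK hW hG (fun k => hW0 _) hG0
      rintro ⟨k, l⟩
      have h1 : |((k : ℤ) : ℝ)| ≤ 1 + |((k : ℤ) : ℝ)| := by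
        nlinarith [abs_nonneg ((k : ℝ))]
      calc |(k : ℝ) * Fp (eC (k, l))| = |(k : ℝ)| * |Fp (eC (k, l))| := abs_mul _ _
        _ ≤ (1 + |((k : ℤ) : ℝ)|) * (CK * (|g l| * |g k|)) :=
            mul_le_mul h1 (key l k) (abs_nonneg _) (by positivity)
        _ = CK * (W k * G l) := by simp only [hWdef, hGdef]; ring
    have hw4 : Summable (fun p : ℤ × ℤ => (p.1 : ℝ) * Fp (eD p)) := by
      apply sumdom CK hWp hGm (fun k => hW0 _) (fun k => hG0 _)
      rintro ⟨k, l⟩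
      have h1 : |((k : ℤ) : ℝ)| ≤ 1 + |((k + 1 : ℤ) : ℝ)| := by
        push_cast; exact abs_le_one_add_abs_add _
      calc |(k : ℝ) * Fp (eD (k, l))| = |(k : ℝ)| * |Fp (eD (k, l))| := abs_mul _ _
        _ ≤ (1 + |((k + 1 : ℤ) : ℝ)|) * (CK * (|g (k + 1)| * |g (l - 1)|)) :=
            mul_le_mul h1 (key (k + 1) (l - 1)) (abs_nonneg _) (by positivity)
        _ = CK * (W (k + 1) * G (l - 1)) := by simp only [hWdef, hGdef]; ring
    have hA : Summable (fun p : ℤ × ℤ => (p.1 : ℝ) * Fp p) := by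
      apply sumdom CK hW hG (fun k => hW0 _) hG0
      rintro ⟨k, l⟩
      have h1 : |((k : ℤ) : ℝ)| ≤ 1 + |((k : ℤ) : ℝ)| := by
        nlinarith [abs_nonneg ((k : ℝ))]
      calc |(k : ℝ) * Fp (k, l)| = |(k : ℝ)| * |Fp (k, l)| := abs_mul _ _
        _ ≤ (1 + |((k : ℤ) : ℝ)|) * (CK * (|g k| * |g l|)) :=
            mul_le_mul h1 (key k l) (abs_nonneg _) (by positivity)
        _ = CK * (W k * G l) := by simp only [hWdef, hGdef]; ring
    have hB : Summable (fun p : ℤ × ℤ => (p.2 : ℝ) * Fp p) := by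
      apply sumdom CK hG hW hG0 (fun k => hW0 _)
      rintro ⟨k, l⟩
      have h1 : |((l : ℤ) : ℝ)| ≤ 1 + |((l : ℤ) : ℝ)| := by
        nlinarith [abs_nonneg ((l : ℝ))]
      calc |(l : ℝ) * Fp (k, l)| = |(l : ℝ)| * |Fp (k, l)| := abs_mul _ _
        _ ≤ (1 + |((l : ℤ) : ℝ)|) * (CK * (|g k| * |g l|)) :=
            mul_le_mul h1 (key k l) (abs_nonneg _) (by positivity)
        _ = CK * (G k * W l) := by simp only [hWdef, hGdef]; ring
    have hwh : Summable (fun p : ℤ × ℤ =>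
        (p.1 : ℝ) * Fp (eA p) - (p.1 : ℝ) * Fp (eB p) - (p.1 : ℝ) * Fp (eC p)
          + (p.1 : ℝ) * Fp (eD p)) := ((hw1.sub hw2).sub hw3).add hw4
    -- values of the four reindexed sums
    have E1 : ∑' p : ℤ × ℤ, (p.1 : ℝ) * Fp (eA p)
        = (∑' p : ℤ × ℤ, (p.2 : ℝ) * Fp p) + ∑' p : ℤ × ℤ, Fp p := by
      rw [← eA.symm.tsum_eq (fun p : ℤ × ℤ => (p.1 : ℝ) * Fp (eA p)),
        ← Summable.tsum_add hB hF]
      apply tsum_congr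
      rintro ⟨a, b⟩
      simp only [eA, Equiv.coe_fn_mk, Equiv.coe_fn_symm_mk, Equiv.symm]
      push_cast
      ring_nf
    have E2 : ∑' p : ℤ × ℤ, (p.1 : ℝ) * Fp (eB p) = ∑' p : ℤ × ℤ, (p.1 : ℝ) * Fp p := by
      rw [← eB.symm.tsum_eq (fun p : ℤ × ℤ => (p.1 : ℝ) * Fp (eB p))]
      apply tsum_congr
      rintro ⟨a, b⟩
      simp only [eB, Equiv.coe_fn_mk, Equiv.coe_fn_symm_mk, Equiv.symm]
      ring_nf
    have E3 : ∑' p : ℤ × ℤ, (p.1 : ℝ) * Fp (eC p) = ∑' p : ℤ × ℤ, (p.2 : ℝ) * Fp p := by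
      rw [← eC.tsum_eq (fun p : ℤ × ℤ => (p.2 : ℝ) * Fp p)]
      apply tsum_congr
      rintro ⟨a, b⟩
      simp only [eC, Equiv.coe_fn_mk]
    have E4 : ∑' p : ℤ × ℤ, (p.1 : ℝ) * Fp (eD p)
        = (∑' p : ℤ × ℤ, (p.1 : ℝ) * Fp p) - ∑' p : ℤ × ℤ, Fp p := by
      rw [← eD.symm.tsum_eq (fun p : ℤ × ℤ => (p.1 : ℝ) * Fp (eD p)),
        ← Summable.tsum_sub hA hF]
      apply tsum_congr
      rintro ⟨a, b⟩
      simp only [eD, Equiv.coe_fn_mk, Equiv.coe_fn_symm_mk, Equiv.symm]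
      push_cast
      ring_nf
    calc ∑' k : ℤ, (k : ℝ) * Qop K g g k
        = ∑' (k : ℤ) (l : ℤ), ((k : ℝ) * Fp (eA (k, l)) - (k : ℝ) * Fp (eB (k, l))
            - (k : ℝ) * Fp (eC (k, l)) + (k : ℝ) * Fp (eD (k, l))) := by
          apply tsum_congr
          intro k
          rw [hQop k, ← tsum_mul_left]
          exact tsum_congr fun l => by ring
      _ = ∑' p : ℤ × ℤ, ((p.1 : ℝ) * Fp (eA p) - (p.1 : ℝ) * Fp (eB p)
            - (p.1 : ℝ) * Fp (eC p) + (p.1 : ℝ) * Fp (eD p)) := (Summable.tsum_prod hwh).symm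
      _ = ((∑' p : ℤ × ℤ, (p.1 : ℝ) * Fp (eA p)) - ∑' p : ℤ × ℤ, (p.1 : ℝ) * Fp (eB p))
            - (∑' p : ℤ × ℤ, (p.1 : ℝ) * Fp (eC p)) + ∑' p : ℤ × ℤ, (p.1 : ℝ) * Fp (eD p) := by
          rw [Summable.tsum_add ((hw1.sub hw2).sub hw3) hw4, Summable.tsum_sub (hw1.sub hw2) hw3,
            Summable.tsum_sub hw1 hw2]
      _ = 0 := by rw [E1, E2, E3, E4]; ring
end

section
/- A priori bound on the absolute total charge: if K is bounded by C_K, f₀ ∈ ℓ_{1,1}(ℤ) is nonnegative, and f ∈ C¹([0,T); ℓ_{1,1}(ℤ)) is a nonnegative solution of ∂_t f(t) = Q(f(t)), f(0) = f₀, which preserves mass m(f(t)) = m(f₀), then ‖f(t)‖_{1,1} ≤ ‖f₀‖_{1,1} + 2 C_K m(f₀)² t for all t ∈ [0,T). -/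
open scoped BigOperators

/-!
Write `Q(g)` as the forward operator of a birth–death chain on `ℤ` whose rates of moving up and
down from `j`, `∑ₗ K(l,j) g(l)` and `∑ₗ K(j,l) g(l)`, are at most `C_K m` with `m = ∑ g`.
Summation by parts then gives `∑ₖ W(k) Q(g)(k) ≥ -2 C_K m²` for every finitely supported
`1`-Lipschitz weight `W`, so `t ↦ ∑ₖ W(k) f(t,k) + 2 C_K m² t` is nondecreasing. For the tent
`W = max (N - |k|) 0`, conservation of mass turns `N m - ∑ₖ W(k) f(t,k)` into the truncated moment
`∑ₖ min(|k|, N) f(t,k)`, which is therefore at most its initial value plus `2 C_K m² t`;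
let `N → ∞`.
-/

open Set Function

lemma summable_mul_of_abs_le {ι : Type*} {c g : ι → ℝ} {C : ℝ} (hc : ∀ i, |c i| ≤ C)
    (hg : Summable g) : Summable fun i => c i * g i :=
  hg.abs.mul_left C |>.of_norm_bounded fun i => by
    rw [Real.norm_eq_abs, abs_mul]
    exact mul_le_mul_of_nonneg_right (hc i) (abs_nonneg _)

/-- The master-equation operator of the birth–death chain on `ℤ` that jumps from `k` to `k + 1`
at rate `a k` and from `k` to `k - 1` at rate `b k`. -/
noncomputable def birthDeathOp (a b g : ℤ → ℝ) (k : ℤ) : ℝ :=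
  a (k - 1) * g (k - 1) + b (k + 1) * g (k + 1) - (a k + b k) * g k

lemma summable_comp_add_mul {W : ℤ → ℝ} (hW : W.HasFiniteSupport) (d : ℤ) (v : ℤ → ℝ) :
    Summable fun j => W (j + d) * v j :=
  summable_of_hasFiniteSupport ((hW.comp_of_injective (add_left_injective d)).fun_mul_left v)

lemma tsum_mul_birthDeathOp {W : ℤ → ℝ} (hW : W.HasFiniteSupport) (a b g : ℤ → ℝ) :
    ∑' k, W k * birthDeathOp a b g k =
      ∑' j, ((W (j + 1) - W j) * a j + (W (j - 1) - W j) * b j) * g j := by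
  have hshift (d : ℤ) (v : ℤ → ℝ) : ∑' k, W k * v (k - d) = ∑' j, W (j + d) * v j := by
    rw [← (Equiv.addRight d).tsum_eq]
    simp
  have hsum₀ (v : ℤ → ℝ) : Summable fun j => W j * v j := by
    simpa using summable_comp_add_mul hW 0 v
  have hup : ∑' k, W k * (a (k - 1) * g (k - 1)) = ∑' j, W (j + 1) * (a j * g j) :=
    hshift 1 fun j => a j * g j
  have hdown : ∑' k, W k * (b (k + 1) * g (k + 1)) = ∑' j, W (j - 1) * (b j * g j) := by
    simpa [sub_eq_add_neg] using hshift (-1) fun j => b j * g j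
  calc ∑' k, W k * birthDeathOp a b g k
      = ∑' k, W k * (a (k - 1) * g (k - 1)) + ∑' k, W k * (b (k + 1) * g (k + 1))
          - ∑' k, W k * ((a k + b k) * g k) := by
        rw [← (hsum₀ _).tsum_add (hsum₀ _), ← ((hsum₀ _).add (hsum₀ _)).tsum_sub (hsum₀ _)]
        exact tsum_congr fun k => by simp only [birthDeathOp]; ring
    _ = ∑' j, ((W (j + 1) - W j) * a j + (W (j - 1) - W j) * b j) * g j := by
        have hsum₁ := summable_comp_add_mul hW (-1) fun j => b j * g j
        simp only [← sub_eq_add_neg] at hsum₁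
        rw [hup, hdown, ← (summable_comp_add_mul hW 1 _).tsum_add hsum₁,
          ← ((summable_comp_add_mul hW 1 _).add hsum₁).tsum_sub (hsum₀ _)]
        exact tsum_congr fun j => by ring

lemma neg_mul_tsum_le_tsum_mul_birthDeathOp {W a b g : ℤ → ℝ} {R : ℝ}
    (hW : W.HasFiniteSupport) (hW₁ : ∀ j, |W (j + 1) - W j| ≤ 1)
    (ha : ∀ j, 0 ≤ a j) (hb : ∀ j, 0 ≤ b j) (hab : ∀ j, a j + b j ≤ R)
    (hg0 : ∀ j, 0 ≤ g j) (hg : Summable g) :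
    -(R * ∑' j, g j) ≤ ∑' k, W k * birthDeathOp a b g k := by
  have hsum : Summable fun j => ((W (j + 1) - W j) * a j + (W (j - 1) - W j) * b j) * g j := by
    refine (((summable_comp_add_mul hW 1 (a * g)).add (summable_comp_add_mul hW (-1) (b * g))).sub
      (summable_comp_add_mul hW 0 ((a + b) * g))).congr fun j => ?_
    simp only [Pi.mul_apply, Pi.add_apply, add_zero, ← sub_eq_add_neg]
    ring
  rw [tsum_mul_birthDeathOp hW, ← tsum_mul_left, ← tsum_neg]
  refine (hg.mul_left R).neg.tsum_le_tsum (fun j => ?_) hsum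
  have hup : -1 ≤ W (j + 1) - W j := (abs_le.mp (hW₁ j)).1
  have hdown : -1 ≤ W (j - 1) - W j := by
    have := (abs_le.mp (hW₁ (j - 1))).2
    rw [sub_add_cancel] at this
    linarith
  have : -R ≤ (W (j + 1) - W j) * a j + (W (j - 1) - W j) * b j := by
    nlinarith [ha j, hb j, hab j]
  simpa only [neg_mul] using mul_le_mul_of_nonneg_right this (hg0 j)

-- `K k l` is the rate of the exchange `(k, l) ↦ (k - 1, l + 1)` with a partner drawn from `g`.
noncomputable def upRate (K : ℤ → ℤ → ℝ) (g : ℤ → ℝ) (j : ℤ) : ℝ := ∑' l, K l j * g l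

noncomputable def downRate (K : ℤ → ℤ → ℝ) (g : ℤ → ℝ) (j : ℤ) : ℝ := ∑' l, K j l * g l

lemma Qop_eq_birthDeathOp {K : ℤ → ℤ → ℝ} {C : ℝ} (hK : ∀ k l, |K k l| ≤ C) (f : ℤ → ℝ)
    {g : ℤ → ℝ} (hg : Summable g) :
    Qop K f g = birthDeathOp (upRate K g) (downRate K g) f := by
  funext k
  have hup (j : ℤ) : Summable fun l => K l j * g l := summable_mul_of_abs_le (hK · j) hg
  have hdown (j : ℤ) : Summable fun l => K j (l - 1) * g (l - 1) :=
    (summable_mul_of_abs_le (hK j) hg).comp_injective (sub_left_injective (b := 1))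
  have hshift (j : ℤ) : ∑' l, K j (l - 1) * g (l - 1) = downRate K g j :=
    (Equiv.subRight 1).tsum_eq fun l => K j l * g l
  have s₁ : Summable fun l => K l (k - 1) * g l * f (k - 1) := (hup _).mul_right _
  have s₂ : Summable fun l => K k (l - 1) * g (l - 1) * f k := (hdown _).mul_right _
  have s₃ : Summable fun l => K l k * g l * f k := (hup _).mul_right _
  have s₄ : Summable fun l => K (k + 1) (l - 1) * g (l - 1) * f (k + 1) := (hdown _).mul_right _
  calc Qop K f g k
      = ∑' l, (K l (k - 1) * g l * f (k - 1) - K k (l - 1) * g (l - 1) * f k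
          - K l k * g l * f k + K (k + 1) (l - 1) * g (l - 1) * f (k + 1)) :=
        tsum_congr fun l => by ring
    _ = birthDeathOp (upRate K g) (downRate K g) f k := by
        rw [((s₁.sub s₂).sub s₃).tsum_add s₄, (s₁.sub s₂).tsum_sub s₃, s₁.tsum_sub s₂,
          tsum_mul_right, tsum_mul_right, tsum_mul_right, tsum_mul_right, hshift, hshift]
        simp only [birthDeathOp, upRate]
        ring

section Rates

variable {K : ℤ → ℤ → ℝ} {C : ℝ} {g : ℤ → ℝ}

lemma upRate_nonneg (hK0 : ∀ k l, 0 ≤ K k l) (hg0 : ∀ l, 0 ≤ g l) (j : ℤ) :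
    0 ≤ upRate K g j :=
  tsum_nonneg fun l => mul_nonneg (hK0 l j) (hg0 l)

lemma downRate_nonneg (hK0 : ∀ k l, 0 ≤ K k l) (hg0 : ∀ l, 0 ≤ g l) (j : ℤ) :
    0 ≤ downRate K g j :=
  tsum_nonneg fun l => mul_nonneg (hK0 j l) (hg0 l)

lemma upRate_add_downRate_le (hK0 : ∀ k l, 0 ≤ K k l) (hKb : ∀ k l, K k l ≤ C)
    (hg0 : ∀ l, 0 ≤ g l) (hg : Summable g) (j : ℤ) :
    upRate K g j + downRate K g j ≤ 2 * C * ∑' l, g l := by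
  have hK : ∀ k l, |K k l| ≤ C := fun k l => (abs_of_nonneg (hK0 k l)).trans_le (hKb k l)
  have hup := summable_mul_of_abs_le (hK · j) hg
  have hdown := summable_mul_of_abs_le (hK j) hg
  rw [upRate, downRate, ← hup.tsum_add hdown, ← tsum_mul_left]
  refine (hup.add hdown).tsum_le_tsum (fun l => ?_) (hg.mul_left _)
  nlinarith [hKb l j, hKb j l, hg0 l]

end Rates

lemma neg_two_mul_sq_le_tsum_mul_Qop {K : ℤ → ℤ → ℝ} {C : ℝ} (hK0 : ∀ k l, 0 ≤ K k l)
    (hKb : ∀ k l, K k l ≤ C) {W : ℤ → ℝ} (hW : W.HasFiniteSupport)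
    (hW₁ : ∀ j, |W (j + 1) - W j| ≤ 1) {g : ℤ → ℝ} (hg0 : ∀ k, 0 ≤ g k) (hg : Summable g) :
    -(2 * C * (∑' k, g k) ^ 2) ≤ ∑' k, W k * Qop K g g k := by
  have hK : ∀ k l, |K k l| ≤ C := fun k l => (abs_of_nonneg (hK0 k l)).trans_le (hKb k l)
  rw [Qop_eq_birthDeathOp hK g hg, sq, ← mul_assoc]
  exact neg_mul_tsum_le_tsum_mul_birthDeathOp hW hW₁ (upRate_nonneg hK0 hg0)
    (downRate_nonneg hK0 hg0) (upRate_add_downRate_le hK0 hKb hg0 hg) hg0 hg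

lemma hasDerivWithinAt_tsum_mul {ι : Type*} {W : ι → ℝ} (hW : W.HasFiniteSupport)
    {u : ℝ → ι → ℝ} {u' : ι → ℝ} {s : Set ℝ} {t : ℝ}
    (hu : ∀ i, HasDerivWithinAt (fun τ => u τ i) (u' i) s t) :
    HasDerivWithinAt (fun τ => ∑' i, W i * u τ i) (∑' i, W i * u' i) s t := by
  have hfin (v : ι → ℝ) :
      ∑' i, W i * v i = ∑ i ∈ Set.Finite.toFinset (s := support W) hW, W i * v i :=
    tsum_eq_sum fun i hi => by
      rw [notMem_support.mp (mt (Set.Finite.mem_toFinset _).mpr hi), zero_mul]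
  simp only [hfin]
  exact HasDerivWithinAt.fun_sum fun i _ => (hu i).const_mul (W i)

lemma le_add_mul_sub_of_hasDerivWithinAt {φ φ' : ℝ → ℝ} {a b c t : ℝ}
    (hφ : ∀ s ∈ Ico a b, HasDerivWithinAt φ (φ' s) (Ico a b) s)
    (hφ' : ∀ s ∈ Ico a b, -c ≤ φ' s) (ht : t ∈ Ico a b) :
    φ a ≤ φ t + c * (t - a) := by
  have hψ (s : ℝ) (hs : s ∈ Ico a b) :
      HasDerivWithinAt (fun τ => φ τ + c * τ) (φ' s + c) (Ico a b) s := by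
    simpa using (hφ s hs).fun_add ((hasDerivWithinAt_id s _).const_mul c)
  have hmono : MonotoneOn (fun τ => φ τ + c * τ) (Ico a b) := by
    refine monotoneOn_of_hasDerivWithinAt_nonneg (convex_Ico a b) (f' := fun s => φ' s + c)
      (fun s hs => (hψ s hs).continuousWithinAt) (fun s hs => ?_) fun s hs => ?_
    · rw [interior_Ico] at hs ⊢
      exact (hψ s (Ioo_subset_Ico_self hs)).mono Ioo_subset_Ico_self
    · rw [interior_Ico] at hs
      linarith [hφ' s (Ioo_subset_Ico_self hs)]
  have := hmono (left_mem_Ico.mpr (ht.1.trans_lt ht.2)) ht ht.1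
  simp only at this
  linarith

lemma tsum_mul_apply_zero_le {K : ℤ → ℤ → ℝ} {C T m : ℝ} {f : ℝ → ℤ → ℝ}
    (hK0 : ∀ k l, 0 ≤ K k l) (hKb : ∀ k l, K k l ≤ C)
    (hpos : ∀ s ∈ Ico (0 : ℝ) T, ∀ k, 0 ≤ f s k) (hsum : ∀ s ∈ Ico (0 : ℝ) T, Summable (f s))
    (hode : ∀ s ∈ Ico (0 : ℝ) T, ∀ k : ℤ,
      HasDerivWithinAt (fun τ => f τ k) (Qop K (f s) (f s) k) (Ico (0 : ℝ) T) s)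
    (hmass : ∀ s ∈ Ico (0 : ℝ) T, ∑' k, f s k = m)
    {W : ℤ → ℝ} (hW : W.HasFiniteSupport) (hW₁ : ∀ j, |W (j + 1) - W j| ≤ 1)
    {t : ℝ} (ht : t ∈ Ico (0 : ℝ) T) :
    ∑' k, W k * f 0 k ≤ ∑' k, W k * f t k + 2 * C * m ^ 2 * t := by
  have := le_add_mul_sub_of_hasDerivWithinAt (φ := fun s => ∑' k, W k * f s k)
    (fun s hs => hasDerivWithinAt_tsum_mul hW (hode s hs))
    (fun s hs => hmass s hs ▸ neg_two_mul_sq_le_tsum_mul_Qop hK0 hKb hW hW₁ (hpos s hs) (hsum s hs))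
    ht
  simpa only [sub_zero] using this

noncomputable def tent (N : ℕ) (k : ℤ) : ℝ := max ((N : ℝ) - |(k : ℝ)|) 0

lemma tent_hasFiniteSupport (N : ℕ) : (tent N).HasFiniteSupport := by
  refine (Set.finite_Icc (-(N : ℤ)) N).subset fun k hk => ?_
  have : |(k : ℝ)| < N := by
    by_contra h
    exact hk (max_eq_right (by linarith))
  rw [← Int.cast_abs, ← Int.cast_natCast, Int.cast_lt] at this
  exact abs_le.mp this.le

lemma abs_tent_add_one_sub_le (N : ℕ) (j : ℤ) : |tent N (j + 1) - tent N j| ≤ 1 :=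
  calc |tent N (j + 1) - tent N j| ≤ |((N : ℝ) - |((j + 1 : ℤ) : ℝ)|) - (N - |(j : ℝ)|)| :=
        abs_max_sub_max_le_abs _ _ _
    _ = |(|(j : ℝ)| - |(j : ℝ) + 1|)| := by push_cast; ring_nf
    _ ≤ |(j : ℝ) - (j + 1)| := abs_abs_sub_abs_le_abs_sub _ _
    _ = 1 := by norm_num

lemma sub_tent_eq_min (N : ℕ) (k : ℤ) : (N : ℝ) - tent N k = min |(k : ℝ)| N := by
  rcases le_total |(k : ℝ)| N with h | h
  · rw [tent, max_eq_left (by linarith), min_eq_left h]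
    ring
  · rw [tent, max_eq_right (by linarith), min_eq_right h, sub_zero]

lemma tsum_min_mul_eq {g : ℤ → ℝ} (hg : Summable g) (N : ℕ) :
    ∑' k : ℤ, min |(k : ℝ)| N * g k = N * ∑' k, g k - ∑' k, tent N k * g k := by
  have htent : Summable fun k => tent N k * g k :=
    summable_of_hasFiniteSupport ((tent_hasFiniteSupport N).fun_mul_left g)
  simp only [← sub_tent_eq_min, sub_mul]
  rw [(hg.mul_left (N : ℝ)).tsum_sub htent, tsum_mul_left]

section Moments

variable {g : ℤ → ℝ}

lemma summable_of_summable_one_add_abs_mul_abs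
    (hg : Summable fun k : ℤ => (1 + |(k : ℝ)|) * |g k|) : Summable g :=
  hg.of_norm_bounded fun k => by
    rw [Real.norm_eq_abs]
    nlinarith [abs_nonneg (k : ℝ), abs_nonneg (g k)]

lemma summable_abs_mul_of_summable_one_add_abs_mul_abs
    (hg : Summable fun k : ℤ => (1 + |(k : ℝ)|) * |g k|) :
    Summable fun k : ℤ => |(k : ℝ)| * g k :=
  hg.of_norm_bounded fun k => by
    rw [Real.norm_eq_abs, abs_mul, abs_abs]
    nlinarith [abs_nonneg (g k)]

lemma tsum_one_add_abs_mul_abs_eq (hg0 : ∀ k, 0 ≤ g k)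
    (hg : Summable fun k : ℤ => (1 + |(k : ℝ)|) * |g k|) :
    ∑' k : ℤ, (1 + |(k : ℝ)|) * |g k| = ∑' k, g k + ∑' k : ℤ, |(k : ℝ)| * g k := by
  rw [← (summable_of_summable_one_add_abs_mul_abs hg).tsum_add
    (summable_abs_mul_of_summable_one_add_abs_mul_abs hg)]
  exact tsum_congr fun k => by rw [abs_of_nonneg (hg0 k)]; ring

lemma summable_min_mul (hg0 : ∀ k, 0 ≤ g k) (hg : Summable fun k : ℤ => |(k : ℝ)| * g k)
    (N : ℕ) : Summable fun k : ℤ => min |(k : ℝ)| N * g k :=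
  hg.of_nonneg_of_le (fun k => mul_nonneg (le_min (abs_nonneg _) N.cast_nonneg) (hg0 k))
    fun k => mul_le_mul_of_nonneg_right (min_le_left _ _) (hg0 k)

lemma tsum_min_mul_le (hg0 : ∀ k, 0 ≤ g k) (hg : Summable fun k : ℤ => |(k : ℝ)| * g k)
    (N : ℕ) : ∑' k : ℤ, min |(k : ℝ)| N * g k ≤ ∑' k : ℤ, |(k : ℝ)| * g k :=
  (summable_min_mul hg0 hg N).tsum_le_tsum
    (fun k => mul_le_mul_of_nonneg_right (min_le_left _ _) (hg0 k)) hg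

lemma tsum_abs_mul_le_of_forall_tsum_min_mul_le (hg0 : ∀ k, 0 ≤ g k)
    (hg : Summable fun k : ℤ => |(k : ℝ)| * g k) {X : ℝ}
    (hX : ∀ N : ℕ, ∑' k : ℤ, min |(k : ℝ)| N * g k ≤ X) : ∑' k : ℤ, |(k : ℝ)| * g k ≤ X := by
  refine hg.tsum_le_of_sum_le fun S => ?_
  set N := S.sup Int.natAbs
  have hN (k : ℤ) (hk : k ∈ S) : |(k : ℝ)| ≤ N := by
    rw [← Int.cast_abs, ← Nat.cast_natAbs]
    exact_mod_cast Finset.le_sup hk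
  calc ∑ k ∈ S, |(k : ℝ)| * g k = ∑ k ∈ S, min |(k : ℝ)| N * g k :=
        Finset.sum_congr rfl fun k hk => by rw [min_eq_left (hN k hk)]
    _ ≤ ∑' k : ℤ, min |(k : ℝ)| N * g k :=
        (summable_min_mul hg0 hg N).sum_le_tsum S fun k _ =>
          mul_nonneg (le_min (abs_nonneg _) N.cast_nonneg) (hg0 k)
    _ ≤ X := hX N

end Moments

theorem apriori_bound_absolute_total_charge_general (K : ℤ → ℤ → ℝ) (CK : ℝ)
    (hK0 : ∀ k l, 0 ≤ K k l) (hKb : ∀ k l, K k l ≤ CK)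
    (T : ℝ)
    (f₀ : ℤ → ℝ)
    (f : ℝ → ℤ → ℝ)
    (hinit : f 0 = f₀)
    (hpos : ∀ t ∈ Set.Ico (0 : ℝ) T, ∀ k, 0 ≤ f t k)
    (hmem : ∀ t ∈ Set.Ico (0 : ℝ) T, Summable fun k : ℤ => (1 + |(k : ℝ)|) * |f t k|)
    (hode : ∀ t ∈ Set.Ico (0 : ℝ) T, ∀ k : ℤ,
      HasDerivWithinAt (fun s => f s k) (Qop K (f t) (f t) k) (Set.Ico (0 : ℝ) T) t)
    (hmass : ∀ t ∈ Set.Ico (0 : ℝ) T, ∑' k : ℤ, f t k = ∑' k : ℤ, f₀ k) :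
    ∀ t ∈ Set.Ico (0 : ℝ) T,
      ∑' k : ℤ, (1 + |(k : ℝ)|) * |f t k| ≤
        (∑' k : ℤ, (1 + |(k : ℝ)|) * |f₀ k|) + 2 * CK * (∑' k : ℤ, f₀ k) ^ 2 * t := by
  intro t ht
  have h0 : (0 : ℝ) ∈ Ico 0 T := left_mem_Ico.mpr (ht.1.trans_lt ht.2)
  have hsum s (hs : s ∈ Ico 0 T) := summable_of_summable_one_add_abs_mul_abs (hmem s hs)
  have habs s (hs : s ∈ Ico 0 T) := summable_abs_mul_of_summable_one_add_abs_mul_abs (hmem s hs)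
  subst hinit
  have hmoment : ∑' k : ℤ, |(k : ℝ)| * f t k ≤
      ∑' k : ℤ, |(k : ℝ)| * f 0 k + 2 * CK * (∑' k, f 0 k) ^ 2 * t := by
    refine tsum_abs_mul_le_of_forall_tsum_min_mul_le (hpos t ht) (habs t ht) fun N => ?_
    have htent := tsum_mul_apply_zero_le hK0 hKb hpos hsum hode hmass
      (tent_hasFiniteSupport N) (abs_tent_add_one_sub_le N) ht
    have hmin := tsum_min_mul_le (hpos 0 h0) (habs 0 h0) N
    rw [tsum_min_mul_eq (hsum 0 h0)] at hmin
    rw [tsum_min_mul_eq (hsum t ht), hmass t ht]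
    linarith
  rw [tsum_one_add_abs_mul_abs_eq (hpos t ht) (hmem t ht),
    tsum_one_add_abs_mul_abs_eq (hpos 0 h0) (hmem 0 h0), hmass t ht]
  linarith

theorem apriori_bound_absolute_total_charge (K : ℤ → ℤ → ℝ) (CK : ℝ) (hCK : 0 < CK)
    (hK0 : ∀ k l, 0 ≤ K k l) (hKb : ∀ k l, K k l ≤ CK)
    (T : ℝ) (hT : 0 < T)
    (f₀ : ℤ → ℝ) (hf₀pos : ∀ k, 0 ≤ f₀ k)
    (hf₀mem : Summable fun k : ℤ => (1 + |(k : ℝ)|) * |f₀ k|)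
    (f : ℝ → ℤ → ℝ)
    (hinit : f 0 = f₀)
    (hpos : ∀ t ∈ Set.Ico (0 : ℝ) T, ∀ k, 0 ≤ f t k)
    (hmem : ∀ t ∈ Set.Ico (0 : ℝ) T, Summable fun k : ℤ => (1 + |(k : ℝ)|) * |f t k|)
    (hode : ∀ t ∈ Set.Ico (0 : ℝ) T, ∀ k : ℤ,
      HasDerivWithinAt (fun s => f s k) (Qop K (f t) (f t) k) (Set.Ico (0 : ℝ) T) t)
    (hmass : ∀ t ∈ Set.Ico (0 : ℝ) T, ∑' k : ℤ, f t k = ∑' k : ℤ, f₀ k) :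
    ∀ t ∈ Set.Ico (0 : ℝ) T,
      ∑' k : ℤ, (1 + |(k : ℝ)|) * |f t k| ≤
        (∑' k : ℤ, (1 + |(k : ℝ)|) * |f₀ k|) + 2 * CK * (∑' k : ℤ, f₀ k) ^ 2 * t :=
  apriori_bound_absolute_total_charge_general K CK hK0 hKb T f₀ f hinit hpos hmem hode hmass
end

section
/- Exponential lower bound preservation: if K is bounded by C_K, f₀ ∈ ℓ¹(ℤ) nonnegative, and f is the corresponding nonnegative mass-preserving solution of ∂_t f = Q(f), then for every t₀ ≥ 0, t ≥ t₀ and k ∈ ℤ one has f(t,k) ≥ e^{−2 C_K m(f₀)(t−t₀)} f(t₀,k). In particular, if f(t,k) > 0 for some t, then f(s,k) > 0 for all s ≥ t. -/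
/-! The gain terms of `Q(g)(k)` are nonnegative and each loss term is at most `C_K g(k) m(g)`,
so `Q(g)(k) ≥ -2 C_K m(g) g(k)`. Along a solution `m(f(t)) = m(f₀)`, hence
`t ↦ exp (2 C_K m(f₀) t) f(t, k)` has nonnegative derivative and is nondecreasing. -/

open scoped BigOperators

section Qop

variable {K : ℤ → ℤ → ℝ} {CK : ℝ} {g : ℤ → ℝ}

theorem summable_kernel_mul_mul (hK0 : ∀ k l, 0 ≤ K k l) (hKb : ∀ k l, K k l ≤ CK)
    {a b : ℤ → ℤ} {p q : ℤ → ℝ} (hp : ∀ l, 0 ≤ p l) (hq : ∀ l, 0 ≤ q l)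
    (hpq : Summable fun l => p l * q l) : Summable fun l => K (a l) (b l) * p l * q l := by
  refine (hpq.mul_left CK).of_nonneg_of_le (fun l => ?_) fun l => ?_
  · have := hK0 (a l) (b l); have := hp l; have := hq l
    positivity
  · rw [← mul_assoc]
    gcongr
    · exact hq l
    · exact hp l
    · exact hKb _ _

theorem summable_Qop_summand (hK0 : ∀ k l, 0 ≤ K k l) (hKb : ∀ k l, K k l ≤ CK)
    (hg0 : ∀ k, 0 ≤ g k) (hgs : Summable g) (k : ℤ) :
    Summable fun l : ℤ => K l (k - 1) * g l * g (k - 1) - K k (l - 1) * g k * g (l - 1)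
      - K l k * g l * g k + K (k + 1) (l - 1) * g (k + 1) * g (l - 1) := by
  have hshift : Summable fun l : ℤ => g (l - 1) := (Equiv.subRight (1 : ℤ)).summable_iff.mpr hgs
  have hg0' : ∀ l : ℤ, 0 ≤ g (l - 1) := fun l => hg0 _
  refine (((summable_kernel_mul_mul hK0 hKb hg0 (fun _ => hg0 _) (hgs.mul_right _)).sub
    (summable_kernel_mul_mul hK0 hKb (fun _ => hg0 _) hg0' (hshift.mul_left _))).sub
    (summable_kernel_mul_mul hK0 hKb hg0 (fun _ => hg0 _) (hgs.mul_right _))).add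
    (summable_kernel_mul_mul hK0 hKb (fun _ => hg0 _) hg0' (hshift.mul_left _))

theorem neg_two_mul_tsum_mul_le_Qop (hK0 : ∀ k l, 0 ≤ K k l) (hKb : ∀ k l, K k l ≤ CK)
    (hg0 : ∀ k, 0 ≤ g k) (hgs : Summable g) (k : ℤ) :
    -(2 * CK * ∑' j, g j) * g k ≤ Qop K g g k := by
  have hshift : Summable fun l : ℤ => g (l - 1) := (Equiv.subRight (1 : ℤ)).summable_iff.mpr hgs
  have loss_bound : ∀ l, -(CK * g k * g (l - 1) + CK * g l * g k) ≤
      K l (k - 1) * g l * g (k - 1) - K k (l - 1) * g k * g (l - 1)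
        - K l k * g l * g k + K (k + 1) (l - 1) * g (k + 1) * g (l - 1) := by
    intro l
    have := hK0 l (k - 1); have := hK0 (k + 1) (l - 1)
    have := hg0 l; have := hg0 k; have := hg0 (k - 1); have := hg0 (k + 1); have := hg0 (l - 1)
    have : K k (l - 1) * g k * g (l - 1) ≤ CK * g k * g (l - 1) := by gcongr; exact hKb _ _
    have : K l k * g l * g k ≤ CK * g l * g k := by gcongr; exact hKb _ _
    have : 0 ≤ K l (k - 1) * g l * g (k - 1) := by positivity
    have : 0 ≤ K (k + 1) (l - 1) * g (k + 1) * g (l - 1) := by positivity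
    linarith
  have tsum_comp_sub_one : ∑' l : ℤ, g (l - 1) = ∑' j, g j := (Equiv.subRight (1 : ℤ)).tsum_eq g
  have hloss : Summable fun l => -(CK * g k * g (l - 1) + CK * g l * g k) :=
    ((hshift.mul_left (CK * g k)).add ((hgs.mul_left CK).mul_right (g k))).neg
  calc -(2 * CK * ∑' j, g j) * g k
      = ∑' l, -(CK * g k * g (l - 1) + CK * g l * g k) := by
        rw [tsum_neg, (hshift.mul_left _).tsum_add ((hgs.mul_left CK).mul_right (g k)),
          tsum_mul_left, tsum_mul_right, tsum_mul_left, tsum_comp_sub_one]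
        ring
    _ ≤ Qop K g g k :=
        hloss.tsum_le_tsum loss_bound (summable_Qop_summand hK0 hKb hg0 hgs k)

end Qop

theorem monotoneOn_exp_mul_of_neg_mul_le_deriv {D : Set ℝ} (hD : Convex ℝ D) {u u' : ℝ → ℝ}
    {c : ℝ} (hu : ∀ t ∈ D, HasDerivWithinAt u (u' t) D t) (hle : ∀ t ∈ D, -c * u t ≤ u' t) :
    MonotoneOn (fun t => Real.exp (c * t) * u t) D := by
  have hderiv : ∀ t ∈ D, HasDerivWithinAt (fun t => Real.exp (c * t) * u t)
      (Real.exp (c * t) * (c * u t + u' t)) D t := fun t ht => by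
    have hexp : HasDerivWithinAt (fun t => Real.exp (c * t)) (Real.exp (c * t) * c) D t := by
      simpa using ((hasDerivAt_id t).const_mul c).exp.hasDerivWithinAt
    exact (hexp.mul (hu t ht)).congr_deriv (by ring)
  refine monotoneOn_of_hasDerivWithinAt_nonneg hD (fun t ht => (hderiv t ht).continuousWithinAt)
    (fun t ht => (hderiv t (interior_subset ht)).mono interior_subset) fun t ht => ?_
  have := hle t (interior_subset ht)
  have := Real.exp_pos (c * t)
  nlinarith

theorem exp_neg_mul_sub_mul_le_of_neg_mul_le_deriv {D : Set ℝ} (hD : Convex ℝ D)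
    {u u' : ℝ → ℝ} {c : ℝ} (hu : ∀ t ∈ D, HasDerivWithinAt u (u' t) D t)
    (hle : ∀ t ∈ D, -c * u t ≤ u' t) {t₀ t : ℝ} (ht₀ : t₀ ∈ D) (ht : t ∈ D) (hlt : t₀ ≤ t) :
    Real.exp (-c * (t - t₀)) * u t₀ ≤ u t := by
  have hmono := monotoneOn_exp_mul_of_neg_mul_le_deriv hD hu hle ht₀ ht hlt
  rw [show -c * (t - t₀) = c * t₀ - c * t by ring, Real.exp_sub, div_mul_eq_mul_div,
    div_le_iff₀ (Real.exp_pos _), mul_comm (u t)]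
  exact hmono

theorem exponential_lower_bound_preservation_general (K : ℤ → ℤ → ℝ) (CK : ℝ)
    (hK0 : ∀ k l, 0 ≤ K k l) (hKb : ∀ k l, K k l ≤ CK)
    (f₀ : ℤ → ℝ)
    (f : ℝ → ℤ → ℝ)
    (hpos : ∀ t ∈ Set.Ici (0 : ℝ), ∀ k, 0 ≤ f t k)
    (hmem : ∀ t ∈ Set.Ici (0 : ℝ), Summable fun k : ℤ => |f t k|)
    (hode : ∀ t ∈ Set.Ici (0 : ℝ), ∀ k : ℤ,
      HasDerivWithinAt (fun s => f s k) (Qop K (f t) (f t) k) (Set.Ici (0 : ℝ)) t)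
    (hmass : ∀ t ∈ Set.Ici (0 : ℝ), ∑' k : ℤ, f t k = ∑' k : ℤ, f₀ k) :
    (∀ t₀ t : ℝ, 0 ≤ t₀ → t₀ ≤ t → ∀ k : ℤ,
        Real.exp (-2 * CK * (∑' k : ℤ, f₀ k) * (t - t₀)) * f t₀ k ≤ f t k) ∧
      (∀ t : ℝ, 0 ≤ t → ∀ k : ℤ, 0 < f t k → ∀ s : ℝ, t ≤ s → 0 < f s k) := by
  have hQ : ∀ k, ∀ t ∈ Set.Ici (0 : ℝ),
      -(2 * CK * ∑' k, f₀ k) * f t k ≤ Qop K (f t) (f t) k := fun k t ht => by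
    rw [← hmass t ht]
    exact neg_two_mul_tsum_mul_le_Qop hK0 hKb (hpos t ht) (hmem t ht).of_abs k
  have lower_bound : ∀ t₀ t : ℝ, 0 ≤ t₀ → t₀ ≤ t → ∀ k : ℤ,
      Real.exp (-2 * CK * (∑' k : ℤ, f₀ k) * (t - t₀)) * f t₀ k ≤ f t k := by
    intro t₀ t ht₀ hle k
    rw [show -2 * CK * ∑' k, f₀ k = -(2 * CK * ∑' k, f₀ k) by ring]
    exact exp_neg_mul_sub_mul_le_of_neg_mul_le_deriv (convex_Ici 0) (fun t ht => hode t ht k)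
      (hQ k) ht₀ (ht₀.trans hle : (0 : ℝ) ≤ t) hle
  refine ⟨lower_bound, fun t ht k hft s hts => ?_⟩
  exact (mul_pos (Real.exp_pos _) hft).trans_le (lower_bound t s ht hts k)

theorem exponential_lower_bound_preservation (K : ℤ → ℤ → ℝ) (CK : ℝ) (hCK : 0 < CK)
    (hK0 : ∀ k l, 0 ≤ K k l) (hKb : ∀ k l, K k l ≤ CK)
    (f₀ : ℤ → ℝ) (hf₀pos : ∀ k, 0 ≤ f₀ k) (hf₀mem : Summable fun k => |f₀ k|)
    (f : ℝ → ℤ → ℝ)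
    (hinit : f 0 = f₀)
    (hpos : ∀ t ∈ Set.Ici (0 : ℝ), ∀ k, 0 ≤ f t k)
    (hmem : ∀ t ∈ Set.Ici (0 : ℝ), Summable fun k : ℤ => |f t k|)
    (hode : ∀ t ∈ Set.Ici (0 : ℝ), ∀ k : ℤ,
      HasDerivWithinAt (fun s => f s k) (Qop K (f t) (f t) k) (Set.Ici (0 : ℝ)) t)
    (hmass : ∀ t ∈ Set.Ici (0 : ℝ), ∑' k : ℤ, f t k = ∑' k : ℤ, f₀ k) :
    (∀ t₀ t : ℝ, 0 ≤ t₀ → t₀ ≤ t → ∀ k : ℤ,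
        Real.exp (-2 * CK * (∑' k : ℤ, f₀ k) * (t - t₀)) * f t₀ k ≤ f t k) ∧
      (∀ t : ℝ, 0 ≤ t → ∀ k : ℤ, 0 < f t k → ∀ s : ℝ, t ≤ s → 0 < f s k) :=
  exponential_lower_bound_preservation_general K CK hK0 hKb f₀ f hpos hmem hode hmass
end

section
/- Pointwise differential inequality: for a kernel K with 0 < c_K ≤ K(k,l) ≤ C_K for all k,l, and any nonnegative g ∈ ℓ¹(ℤ), the collision operator satisfies Q(g)(k) ≥ c_K m(g) g(k−1) − 2 C_K m(g) g(k) for all k ∈ ℤ, where m(g) = ∑_l g(l). -/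
open scoped BigOperators

/-!
Split `Q(g)(k)` into its four series. Each one is a kernel-weighted mass of `g` (or of its shift
`l ↦ g (l - 1)`, which has the same mass), hence lies between `c_K m(g)` and `C_K m(g)`. The first
gain term is bounded below by `c_K m(g) g(k-1)`, the two loss terms above by `C_K m(g) g(k)`, and the
second gain term is dropped as nonnegative.
-/

section KernelWeightedSums

variable {ι : Type*} {K g : ι → ℝ} {c C : ℝ}

theorem summable_mul_of_nonneg_of_le (hK0 : ∀ i, 0 ≤ K i) (hKC : ∀ i, K i ≤ C)
    (hg0 : ∀ i, 0 ≤ g i) (hg : Summable g) : Summable fun i => K i * g i :=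
  (hg.mul_left C).of_nonneg_of_le (fun i => mul_nonneg (hK0 i) (hg0 i))
    fun i => mul_le_mul_of_nonneg_right (hKC i) (hg0 i)

theorem mul_tsum_le_tsum_mul (hcK : ∀ i, c ≤ K i) (hg0 : ∀ i, 0 ≤ g i) (hg : Summable g)
    (hKg : Summable fun i => K i * g i) : c * ∑' i, g i ≤ ∑' i, K i * g i := by
  rw [← tsum_mul_left]
  exact (hg.mul_left c).tsum_le_tsum (fun i => mul_le_mul_of_nonneg_right (hcK i) (hg0 i)) hKg

theorem tsum_mul_le_mul_tsum (hKC : ∀ i, K i ≤ C) (hg0 : ∀ i, 0 ≤ g i) (hg : Summable g)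
    (hKg : Summable fun i => K i * g i) : ∑' i, K i * g i ≤ C * ∑' i, g i := by
  rw [← tsum_mul_left]
  exact hKg.tsum_le_tsum (fun i => mul_le_mul_of_nonneg_right (hKC i) (hg0 i)) (hg.mul_left C)

end KernelWeightedSums

theorem summable_comp_sub_one {g : ℤ → ℝ} (hg : Summable g) : Summable fun l => g (l - 1) :=
  (Equiv.subRight (1 : ℤ)).summable_iff.mpr hg

theorem tsum_comp_sub_one (g : ℤ → ℝ) : ∑' l, g (l - 1) = ∑' l, g l :=
  (Equiv.subRight (1 : ℤ)).tsum_eq g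

theorem Qop_eq_of_summable (K : ℤ → ℤ → ℝ) (f g : ℤ → ℝ) (k : ℤ)
    (hA : Summable fun l => K l (k - 1) * g l) (hB : Summable fun l => K k (l - 1) * g (l - 1))
    (hC : Summable fun l => K l k * g l)
    (hD : Summable fun l => K (k + 1) (l - 1) * g (l - 1)) :
    Qop K f g k = (∑' l, K l (k - 1) * g l) * f (k - 1) - f k * (∑' l, K k (l - 1) * g (l - 1))
      - (∑' l, K l k * g l) * f k + f (k + 1) * ∑' l, K (k + 1) (l - 1) * g (l - 1) := by
  have hsum := (((hA.hasSum.mul_right (f (k - 1))).sub (hB.hasSum.mul_left (f k))).sub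
    (hC.hasSum.mul_right (f k))).add (hD.hasSum.mul_left (f (k + 1)))
  rw [Qop, ← hsum.tsum_eq]
  congr 1
  funext l
  ring

theorem pointwise_lower_bound_for_Q (K : ℤ → ℤ → ℝ) (cK CK : ℝ) (hcK : 0 < cK)
    (hKlow : ∀ k l, cK ≤ K k l) (hKb : ∀ k l, K k l ≤ CK)
    (g : ℤ → ℝ) (hg0 : ∀ k, 0 ≤ g k) (hg : Summable g) :
    ∀ k : ℤ, cK * (∑' l : ℤ, g l) * g (k - 1) - 2 * CK * (∑' l : ℤ, g l) * g k ≤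
      Qop K g g k := by
  intro k
  have hK0 : ∀ a b, 0 ≤ K a b := fun a b => hcK.le.trans (hKlow a b)
  have hgs := summable_comp_sub_one hg
  have hgs0 : ∀ l, 0 ≤ g (l - 1) := fun l => hg0 (l - 1)
  have hA := summable_mul_of_nonneg_of_le (hK0 · (k - 1)) (hKb · (k - 1)) hg0 hg
  have hB := summable_mul_of_nonneg_of_le (fun l => hK0 k (l - 1)) (fun l => hKb k (l - 1)) hgs0 hgs
  have hC := summable_mul_of_nonneg_of_le (hK0 · k) (hKb · k) hg0 hg
  have hD := summable_mul_of_nonneg_of_le (fun l => hK0 (k + 1) (l - 1))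
    (fun l => hKb (k + 1) (l - 1)) hgs0 hgs
  have gainA := mul_tsum_le_tsum_mul (hKlow · (k - 1)) hg0 hg hA
  have lossB := tsum_mul_le_mul_tsum (fun l => hKb k (l - 1)) hgs0 hgs hB
  have lossC := tsum_mul_le_mul_tsum (hKb · k) hg0 hg hC
  have gainD : 0 ≤ ∑' l, K (k + 1) (l - 1) * g (l - 1) :=
    tsum_nonneg fun l => mul_nonneg (hK0 (k + 1) (l - 1)) (hgs0 l)
  rw [tsum_comp_sub_one g] at lossB
  rw [Qop_eq_of_summable K g g k hA hB hC hD]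
  linarith [mul_le_mul_of_nonneg_right gainA (hg0 (k - 1)),
    mul_le_mul_of_nonneg_left lossB (hg0 k), mul_le_mul_of_nonneg_right lossC (hg0 k),
    mul_nonneg (hg0 (k + 1)) gainD]
end

section
/- Truncation error estimate: let K be bounded by C_K, N ∈ ℕ, and let K^N be the truncated kernel (K^N(k,l) = K(k,l) if k ∈ {−N+1,…,N} and l ∈ {−N,…,N−1}, else 0), with associated collision operator Q^N. Then for every g : ℤ → [0,∞) with g(k) = 0 whenever |k| > N, one has ‖Q^N(g) − Q(g)‖_{1,1} ≤ (6 + 4N) C_K m(g) (g(−N) + g(N)). -/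
open scoped BigOperators

/-- The truncated kernel `K^N`. -/
def truncK (K : ℤ → ℤ → ℝ) (N : ℕ) (k l : ℤ) : ℝ :=
  if -(N : ℤ) + 1 ≤ k ∧ k ≤ (N : ℤ) ∧ -(N : ℤ) ≤ l ∧ l ≤ (N : ℤ) - 1 then K k l else 0

theorem truncation_error_estimate (K : ℤ → ℤ → ℝ) (CK : ℝ) (hCK : 0 < CK)
    (hK0 : ∀ k l, 0 ≤ K k l) (hKb : ∀ k l, K k l ≤ CK)
    (N : ℕ) (g : ℤ → ℝ) (hg0 : ∀ k, 0 ≤ g k)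
    (hgsupp : ∀ k : ℤ, (N : ℤ) < |k| → g k = 0) :
    ∑' k : ℤ, (1 + |(k : ℝ)|) * |Qop (truncK K N) g g k - Qop K g g k| ≤
      (6 + 4 * (N : ℝ)) * CK * (∑' k : ℤ, g k) * (g (-(N : ℤ)) + g (N : ℤ)) := by
  classical
  have hg : ∀ k : ℤ, g k ≠ 0 → -(N : ℤ) ≤ k ∧ k ≤ (N : ℤ) := by
    intro k hk
    by_contra hcon
    exact hk (hgsupp k (by rcases abs_cases k with ⟨h1, h2⟩ | ⟨h1, h2⟩ <;> omega))
  set T : Finset ℤ := Finset.Icc (-(N : ℤ)) ((N : ℤ) + 1) with hT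
  set S : Finset ℤ := Finset.Icc (-(N : ℤ) - 1) ((N : ℤ) + 1) with hS
  have hgT : ∀ b : ℤ, b ∉ T → g b = 0 := by
    intro b hb
    by_contra h
    have hb2 := hg b h
    rw [hT, Finset.mem_Icc] at hb
    omega
  have hgsum : Summable g := summable_of_ne_finset_zero hgT
  set M : ℝ := ∑' k, g k with hM
  have hM0 : 0 ≤ M := tsum_nonneg hg0
  have hMle : ∀ s : Finset ℤ, ∑ k ∈ s, g k ≤ M := fun s => Summable.sum_le_tsum s (fun b _ => hg0 b) hgsum
  have hshift : ∀ (c : ℤ) (s : Finset ℤ), ∑ k ∈ s, g (k + c) ≤ M := by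
    intro c s
    have h1 : ∑ k ∈ s.map (Equiv.addRight c).toEmbedding, g k = ∑ k ∈ s, g (k + c) := by
      rw [Finset.sum_map]; rfl
    rw [← h1]; exact hMle _
  have hshift1 : ∀ s : Finset ℤ, ∑ k ∈ s, g (k - 1) ≤ M := by
    intro s
    simpa [sub_eq_add_neg] using hshift (-1) s
  -- Qop as a finite sum
  have hQK : ∀ (J : ℤ → ℤ → ℝ) (k : ℤ), Qop J g g k =
      ∑ l ∈ T, (J l (k - 1) * g l * g (k - 1) - J k (l - 1) * g k * g (l - 1)
        - J l k * g l * g k + J (k + 1) (l - 1) * g (k + 1) * g (l - 1)) := by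
    intro J k
    unfold Qop
    refine tsum_eq_sum ?_
    intro l hl
    have h1 : g l = 0 := hgT l hl
    have h2 : g (l - 1) = 0 := by
      by_contra h
      have := hg (l - 1) h
      rw [hT, Finset.mem_Icc] at hl
      omega
    rw [h1, h2]; ring
  have hQzero : ∀ (J : ℤ → ℤ → ℝ) (k : ℤ), k ∉ S → Qop J g g k = 0 := by
    intro J k hk
    rw [hS, Finset.mem_Icc] at hk
    have h1 : g (k - 1) = 0 := by
      by_contra h; have := hg (k - 1) h; omega
    have h2 : g k = 0 := by
      by_contra h; have := hg k h; omega
    have h3 : g (k + 1) = 0 := by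
      by_contra h; have := hg (k + 1) h; omega
    unfold Qop
    have : ∀ l : ℤ, (J l (k - 1) * g l * g (k - 1) - J k (l - 1) * g k * g (l - 1)
        - J l k * g l * g k + J (k + 1) (l - 1) * g (k + 1) * g (l - 1)) = 0 := by
      intro l; rw [h1, h2, h3]; ring
    rw [tsum_congr this, tsum_zero]
  -- key kernel-difference bound
  have hkey : ∀ x y : ℤ, |truncK K N x y - K x y| * (g x * g y) ≤
      CK * ((if x = -(N : ℤ) then g x * g y else 0) + (if y = (N : ℤ) then g x * g y else 0)) := by
    intro x y
    have hi1 : (0 : ℝ) ≤ if x = -(N : ℤ) then g x * g y else 0 := by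
      split_ifs; exacts [mul_nonneg (hg0 _) (hg0 _), le_rfl]
    have hi2 : (0 : ℝ) ≤ if y = (N : ℤ) then g x * g y else 0 := by
      split_ifs; exacts [mul_nonneg (hg0 _) (hg0 _), le_rfl]
    have hrhs : (0 : ℝ) ≤ CK * ((if x = -(N : ℤ) then g x * g y else 0)
        + (if y = (N : ℤ) then g x * g y else 0)) := mul_nonneg hCK.le (add_nonneg hi1 hi2)
    by_cases hbox : -(N : ℤ) + 1 ≤ x ∧ x ≤ (N : ℤ) ∧ -(N : ℤ) ≤ y ∧ y ≤ (N : ℤ) - 1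
    · rw [truncK, if_pos hbox, sub_self, abs_zero, zero_mul]
      exact hrhs
    · rw [truncK, if_neg hbox, zero_sub, abs_neg, abs_of_nonneg (hK0 x y)]
      rcases eq_or_ne (g x) 0 with hx | hx
      · rw [show K x y * (g x * g y) = 0 by rw [hx]; ring]; exact hrhs
      rcases eq_or_ne (g y) 0 with hy | hy
      · rw [show K x y * (g x * g y) = 0 by rw [hy]; ring]; exact hrhs
      have hx' := hg x hx
      have hy' := hg y hy
      have hcase : x = -(N : ℤ) ∨ y = (N : ℤ) := by omega
      have h2 : K x y * (g x * g y) ≤ CK * (g x * g y) :=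
        mul_le_mul_of_nonneg_right (hKb x y) (mul_nonneg (hg0 x) (hg0 y))
      refine h2.trans ?_
      rcases hcase with h | h
      · rw [if_pos h]
        nlinarith [mul_nonneg hCK.le hi2]
      · rw [if_pos h]
        nlinarith [mul_nonneg hCK.le hi1]
  have habs4 : ∀ a b c d : ℝ, |a - b - c + d| ≤ |a| + |b| + |c| + |d| := by
    intro a b c d
    have h1 : |a - b - c + d| ≤ |a - b - c| + |d| := abs_add_le _ _
    have h2 : |a - b - c| ≤ |a - b| + |c| := by
      rw [show a - b - c = a - b + -c by ring]
      simpa [abs_neg] using abs_add_le (a - b) (-c)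
    have h3 : |a - b| ≤ |a| + |b| := by
      rw [sub_eq_add_neg]
      simpa [abs_neg] using abs_add_le a (-b)
    linarith
  have hw1 : ∀ k ∈ S, (1 : ℝ) + |(k : ℝ)| ≤ (N : ℝ) + 2 := by
    intro k hk
    rw [hS, Finset.mem_Icc] at hk
    have h1 : |(k : ℝ)| ≤ (N : ℝ) + 1 := by
      rw [abs_le]
      constructor
      · have := hk.1
        have : ((-(N : ℤ) - 1 : ℤ) : ℝ) ≤ (k : ℝ) := by exact_mod_cast this
        push_cast at this
        linarith
      · have := hk.2
        have : (k : ℝ) ≤ (((N : ℤ) + 1 : ℤ) : ℝ) := by exact_mod_cast this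
        push_cast at this
        linarith
    linarith
  have hw2 : ∀ k : ℤ, ((1 : ℝ) + |(k : ℝ)|) * g k ≤ ((N : ℝ) + 1) * g k := by
    intro k
    rcases eq_or_ne (g k) 0 with h | h
    · rw [h, mul_zero, mul_zero]
    · have hk := hg k h
      have h1 : |(k : ℝ)| ≤ (N : ℝ) := by
        rw [abs_le]
        constructor
        · exact_mod_cast hk.1
        · exact_mod_cast hk.2
      exact mul_le_mul_of_nonneg_right (by linarith) (hg0 k)
  have hw3 : ∀ k : ℤ, ((1 : ℝ) + |(k : ℝ)|) * g (k + 1) ≤ ((N : ℝ) + 2) * g (k + 1) := by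
    intro k
    rcases eq_or_ne (g (k + 1)) 0 with h | h
    · rw [h, mul_zero, mul_zero]
    · have hk := hg (k + 1) h
      have h1 : |(k : ℝ)| ≤ (N : ℝ) + 1 := by
        rw [abs_le]
        constructor
        · have : (-(N : ℤ) - 1 : ℤ) ≤ k := by omega
          have : ((-(N : ℤ) - 1 : ℤ) : ℝ) ≤ (k : ℝ) := by exact_mod_cast this
          push_cast at this; linarith
        · have : (k : ℤ) ≤ (N : ℤ) - 1 := by omega
          have : ((k : ℤ) : ℝ) ≤ (((N : ℤ) - 1 : ℤ) : ℝ) := by exact_mod_cast this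
          push_cast at this; linarith
      exact mul_le_mul_of_nonneg_right (by linarith) (hg0 _)
  -- the per-k bound function
  set B' : ℤ → ℝ := fun k =>
      ((g (-(N : ℤ)) * g (k - 1) + (if k = (N : ℤ) + 1 then M * g (N : ℤ) else 0))
        + ((if k = -(N : ℤ) then g (-(N : ℤ)) * M else 0) + g k * g (N : ℤ))
        + (g (-(N : ℤ)) * g k + (if k = (N : ℤ) then M * g (N : ℤ) else 0)))
        + ((if k = -(N : ℤ) - 1 then g (-(N : ℤ)) * M else 0) + g (k + 1) * g (N : ℤ)) with hB'
  have hinner : ∀ k : ℤ, |Qop (truncK K N) g g k - Qop K g g k| ≤ CK * B' k := by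
    intro k
    rw [hQK (truncK K N) k, hQK K k, ← Finset.sum_sub_distrib]
    refine (Finset.abs_sum_le_sum_abs _ _).trans ?_
    have hpoint : ∀ l ∈ T,
        |(truncK K N l (k - 1) * g l * g (k - 1) - truncK K N k (l - 1) * g k * g (l - 1)
          - truncK K N l k * g l * g k + truncK K N (k + 1) (l - 1) * g (k + 1) * g (l - 1))
         - (K l (k - 1) * g l * g (k - 1) - K k (l - 1) * g k * g (l - 1)
          - K l k * g l * g k + K (k + 1) (l - 1) * g (k + 1) * g (l - 1))| ≤
        CK * ((((if l = -(N : ℤ) then g l * g (k - 1) else 0) + (if k - 1 = (N : ℤ) then g l * g (k - 1) else 0))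
          + ((if k = -(N : ℤ) then g k * g (l - 1) else 0) + (if l - 1 = (N : ℤ) then g k * g (l - 1) else 0))
          + ((if l = -(N : ℤ) then g l * g k else 0) + (if k = (N : ℤ) then g l * g k else 0)))
          + ((if k + 1 = -(N : ℤ) then g (k + 1) * g (l - 1) else 0) + (if l - 1 = (N : ℤ) then g (k + 1) * g (l - 1) else 0))) := by
      intro l _
      have e : (truncK K N l (k - 1) * g l * g (k - 1) - truncK K N k (l - 1) * g k * g (l - 1)
          - truncK K N l k * g l * g k + truncK K N (k + 1) (l - 1) * g (k + 1) * g (l - 1))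
         - (K l (k - 1) * g l * g (k - 1) - K k (l - 1) * g k * g (l - 1)
          - K l k * g l * g k + K (k + 1) (l - 1) * g (k + 1) * g (l - 1)) =
          (truncK K N l (k - 1) - K l (k - 1)) * (g l * g (k - 1))
          - (truncK K N k (l - 1) - K k (l - 1)) * (g k * g (l - 1))
          - (truncK K N l k - K l k) * (g l * g k)
          + (truncK K N (k + 1) (l - 1) - K (k + 1) (l - 1)) * (g (k + 1) * g (l - 1)) := by ring
      rw [e]
      refine (habs4 _ _ _ _).trans ?_
      have a1 : |(truncK K N l (k - 1) - K l (k - 1)) * (g l * g (k - 1))| ≤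
          CK * ((if l = -(N : ℤ) then g l * g (k - 1) else 0) + (if k - 1 = (N : ℤ) then g l * g (k - 1) else 0)) := by
        rw [abs_mul, abs_of_nonneg (mul_nonneg (hg0 _) (hg0 _))]
        exact hkey l (k - 1)
      have a2 : |(truncK K N k (l - 1) - K k (l - 1)) * (g k * g (l - 1))| ≤
          CK * ((if k = -(N : ℤ) then g k * g (l - 1) else 0) + (if l - 1 = (N : ℤ) then g k * g (l - 1) else 0)) := by
        rw [abs_mul, abs_of_nonneg (mul_nonneg (hg0 _) (hg0 _))]
        exact hkey k (l - 1)
      have a3 : |(truncK K N l k - K l k) * (g l * g k)| ≤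
          CK * ((if l = -(N : ℤ) then g l * g k else 0) + (if k = (N : ℤ) then g l * g k else 0)) := by
        rw [abs_mul, abs_of_nonneg (mul_nonneg (hg0 _) (hg0 _))]
        exact hkey l k
      have a4 : |(truncK K N (k + 1) (l - 1) - K (k + 1) (l - 1)) * (g (k + 1) * g (l - 1))| ≤
          CK * ((if k + 1 = -(N : ℤ) then g (k + 1) * g (l - 1) else 0) + (if l - 1 = (N : ℤ) then g (k + 1) * g (l - 1) else 0)) := by
        rw [abs_mul, abs_of_nonneg (mul_nonneg (hg0 _) (hg0 _))]
        exact hkey (k + 1) (l - 1)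
      calc _ ≤ CK * ((if l = -(N : ℤ) then g l * g (k - 1) else 0) + (if k - 1 = (N : ℤ) then g l * g (k - 1) else 0))
            + CK * ((if k = -(N : ℤ) then g k * g (l - 1) else 0) + (if l - 1 = (N : ℤ) then g k * g (l - 1) else 0))
            + CK * ((if l = -(N : ℤ) then g l * g k else 0) + (if k = (N : ℤ) then g l * g k else 0))
            + CK * ((if k + 1 = -(N : ℤ) then g (k + 1) * g (l - 1) else 0) + (if l - 1 = (N : ℤ) then g (k + 1) * g (l - 1) else 0)) :=
          add_le_add (add_le_add (add_le_add a1 a2) a3) a4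
        _ = _ := by ring
    refine (Finset.sum_le_sum hpoint).trans ?_
    rw [← Finset.mul_sum]
    refine mul_le_mul_of_nonneg_left ?_ hCK.le
    -- now bound the inner (over l) sums
    have hp1 : ∑ l ∈ T, (if l = -(N : ℤ) then g l * g (k - 1) else 0) = g (-(N : ℤ)) * g (k - 1) := by
      rw [Finset.sum_ite_eq' T (-(N : ℤ)) (fun l => g l * g (k - 1)),
        if_pos (by rw [hT, Finset.mem_Icc]; omega)]
    have hp2 : ∑ l ∈ T, (if k - 1 = (N : ℤ) then g l * g (k - 1) else 0) ≤
        (if k = (N : ℤ) + 1 then M * g (N : ℤ) else 0) := by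
      by_cases h : k - 1 = (N : ℤ)
      · rw [if_pos (show k = (N : ℤ) + 1 by omega)]
        simp only [h, eq_self_iff_true, ite_true]
        rw [← Finset.sum_mul]
        exact mul_le_mul_of_nonneg_right (hMle T) (hg0 _)
      · rw [if_neg (show ¬ k = (N : ℤ) + 1 by omega)]
        simp only [h, ite_false, Finset.sum_const_zero, le_refl]
    have hp3 : ∑ l ∈ T, (if k = -(N : ℤ) then g k * g (l - 1) else 0) ≤
        (if k = -(N : ℤ) then g (-(N : ℤ)) * M else 0) := by
      by_cases h : k = -(N : ℤ)
      · rw [if_pos h]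
        simp only [h, eq_self_iff_true, ite_true]
        rw [← Finset.mul_sum]
        exact mul_le_mul_of_nonneg_left (hshift1 T) (hg0 _)
      · rw [if_neg h]
        simp only [h, ite_false, Finset.sum_const_zero, le_refl]
    have hp4 : ∑ l ∈ T, (if l - 1 = (N : ℤ) then g k * g (l - 1) else 0) = g k * g (N : ℤ) := by
      have hcongr : ∀ l ∈ T, (if l - 1 = (N : ℤ) then g k * g (l - 1) else 0)
          = (if l = (N : ℤ) + 1 then g k * g (l - 1) else 0) := by
        intro l _
        by_cases h : l - 1 = (N : ℤ)
        · rw [if_pos h, if_pos (by omega)]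
        · rw [if_neg h, if_neg (by omega)]
      rw [Finset.sum_congr rfl hcongr, Finset.sum_ite_eq' T ((N : ℤ) + 1) (fun l => g k * g (l - 1)),
        if_pos (by rw [hT, Finset.mem_Icc]; omega)]
      norm_num
    have hp5 : ∑ l ∈ T, (if l = -(N : ℤ) then g l * g k else 0) = g (-(N : ℤ)) * g k := by
      rw [Finset.sum_ite_eq' T (-(N : ℤ)) (fun l => g l * g k),
        if_pos (by rw [hT, Finset.mem_Icc]; omega)]
    have hp6 : ∑ l ∈ T, (if k = (N : ℤ) then g l * g k else 0) ≤
        (if k = (N : ℤ) then M * g (N : ℤ) else 0) := by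
      by_cases h : k = (N : ℤ)
      · rw [if_pos h]
        simp only [h, eq_self_iff_true, ite_true]
        rw [← Finset.sum_mul]
        exact mul_le_mul_of_nonneg_right (hMle T) (hg0 _)
      · rw [if_neg h]
        simp only [h, ite_false, Finset.sum_const_zero, le_refl]
    have hp7 : ∑ l ∈ T, (if k + 1 = -(N : ℤ) then g (k + 1) * g (l - 1) else 0) ≤
        (if k = -(N : ℤ) - 1 then g (-(N : ℤ)) * M else 0) := by
      by_cases h : k + 1 = -(N : ℤ)
      · rw [if_pos (show k = -(N : ℤ) - 1 by omega)]
        simp only [h, eq_self_iff_true, ite_true]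
        rw [← Finset.mul_sum]
        exact mul_le_mul_of_nonneg_left (hshift1 T) (hg0 _)
      · rw [if_neg (show ¬ k = -(N : ℤ) - 1 by omega)]
        simp only [h, ite_false, Finset.sum_const_zero, le_refl]
    have hp8 : ∑ l ∈ T, (if l - 1 = (N : ℤ) then g (k + 1) * g (l - 1) else 0) = g (k + 1) * g (N : ℤ) := by
      have hcongr : ∀ l ∈ T, (if l - 1 = (N : ℤ) then g (k + 1) * g (l - 1) else 0)
          = (if l = (N : ℤ) + 1 then g (k + 1) * g (l - 1) else 0) := by
        intro l _
        by_cases h : l - 1 = (N : ℤ)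
        · rw [if_pos h, if_pos (by omega)]
        · rw [if_neg h, if_neg (by omega)]
      rw [Finset.sum_congr rfl hcongr, Finset.sum_ite_eq' T ((N : ℤ) + 1) (fun l => g (k + 1) * g (l - 1)),
        if_pos (by rw [hT, Finset.mem_Icc]; omega)]
      norm_num
    simp only [Finset.sum_add_distrib, hB']
    exact add_le_add (add_le_add (add_le_add (add_le_add (le_of_eq hp1) hp2)
      (add_le_add hp3 (le_of_eq hp4))) (add_le_add (le_of_eq hp5) hp6))
      (add_le_add hp7 (le_of_eq hp8))
  -- evaluation of weighted ite sums over S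
  have hqite : ∀ (c : ℤ) (C : ℝ), c ∈ S →
      ∑ k ∈ S, (1 + |(k : ℝ)|) * (if k = c then C else 0) = (1 + |(c : ℝ)|) * C := by
    intro c C hc
    have h : ∀ k ∈ S, (1 + |(k : ℝ)|) * (if k = c then C else 0)
        = (if k = c then (1 + |(k : ℝ)|) * C else 0) := fun k _ => by rw [mul_ite, mul_zero]
    rw [Finset.sum_congr rfl h, Finset.sum_ite_eq' S c (fun k => (1 + |(k : ℝ)|) * C), if_pos hc]
  -- the eight outer bounds
  have hq1 : ∑ k ∈ S, (1 + |(k : ℝ)|) * (g (-(N : ℤ)) * g (k - 1)) ≤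
      ((N : ℝ) + 2) * (g (-(N : ℤ)) * M) := by
    calc ∑ k ∈ S, (1 + |(k : ℝ)|) * (g (-(N : ℤ)) * g (k - 1))
        ≤ ∑ k ∈ S, ((N : ℝ) + 2) * (g (-(N : ℤ)) * g (k - 1)) :=
          Finset.sum_le_sum fun k hk =>
            mul_le_mul_of_nonneg_right (hw1 k hk) (mul_nonneg (hg0 _) (hg0 _))
      _ = ((N : ℝ) + 2) * (g (-(N : ℤ)) * ∑ k ∈ S, g (k - 1)) := by
          rw [← Finset.mul_sum, ← Finset.mul_sum]
      _ ≤ ((N : ℝ) + 2) * (g (-(N : ℤ)) * M) :=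
          mul_le_mul_of_nonneg_left (mul_le_mul_of_nonneg_left (hshift1 S) (hg0 _)) (by positivity)
  have hq2 : ∑ k ∈ S, (1 + |(k : ℝ)|) * (if k = (N : ℤ) + 1 then M * g (N : ℤ) else 0) ≤
      ((N : ℝ) + 2) * (M * g (N : ℤ)) := by
    rw [hqite ((N : ℤ) + 1) (M * g (N : ℤ)) (by rw [hS, Finset.mem_Icc]; omega)]
    have e : |(((N : ℤ) + 1 : ℤ) : ℝ)| = (N : ℝ) + 1 := by
      rw [abs_of_nonneg (by positivity)]; push_cast; ring
    rw [e, show (1 + ((N : ℝ) + 1)) = (N : ℝ) + 2 by ring]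
  have hq3 : ∑ k ∈ S, (1 + |(k : ℝ)|) * (if k = -(N : ℤ) then g (-(N : ℤ)) * M else 0) ≤
      ((N : ℝ) + 1) * (g (-(N : ℤ)) * M) := by
    rw [hqite (-(N : ℤ)) (g (-(N : ℤ)) * M) (by rw [hS, Finset.mem_Icc]; omega)]
    have e : |((-(N : ℤ) : ℤ) : ℝ)| = (N : ℝ) := by
      rw [show ((-(N : ℤ) : ℤ) : ℝ) = -(N : ℝ) by push_cast; ring, abs_neg,
        abs_of_nonneg (by positivity)]
    rw [e, show (1 + (N : ℝ)) = (N : ℝ) + 1 by ring]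
  have hq4 : ∑ k ∈ S, (1 + |(k : ℝ)|) * (g k * g (N : ℤ)) ≤
      ((N : ℝ) + 1) * (M * g (N : ℤ)) := by
    calc ∑ k ∈ S, (1 + |(k : ℝ)|) * (g k * g (N : ℤ))
        = ∑ k ∈ S, ((1 + |(k : ℝ)|) * g k) * g (N : ℤ) :=
          Finset.sum_congr rfl fun k _ => by ring
      _ ≤ ∑ k ∈ S, (((N : ℝ) + 1) * g k) * g (N : ℤ) :=
          Finset.sum_le_sum fun k _ => mul_le_mul_of_nonneg_right (hw2 k) (hg0 _)
      _ = ((N : ℝ) + 1) * ((∑ k ∈ S, g k) * g (N : ℤ)) := by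
          rw [← Finset.sum_mul, ← Finset.mul_sum, mul_assoc]
      _ ≤ ((N : ℝ) + 1) * (M * g (N : ℤ)) :=
          mul_le_mul_of_nonneg_left (mul_le_mul_of_nonneg_right (hMle S) (hg0 _)) (by positivity)
  have hq5 : ∑ k ∈ S, (1 + |(k : ℝ)|) * (g (-(N : ℤ)) * g k) ≤
      ((N : ℝ) + 1) * (g (-(N : ℤ)) * M) := by
    calc ∑ k ∈ S, (1 + |(k : ℝ)|) * (g (-(N : ℤ)) * g k)
        = ∑ k ∈ S, g (-(N : ℤ)) * ((1 + |(k : ℝ)|) * g k) :=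
          Finset.sum_congr rfl fun k _ => by ring
      _ ≤ ∑ k ∈ S, g (-(N : ℤ)) * (((N : ℝ) + 1) * g k) :=
          Finset.sum_le_sum fun k _ => mul_le_mul_of_nonneg_left (hw2 k) (hg0 _)
      _ = ((N : ℝ) + 1) * (g (-(N : ℤ)) * ∑ k ∈ S, g k) := by
          rw [← Finset.mul_sum, ← Finset.mul_sum]; ring
      _ ≤ ((N : ℝ) + 1) * (g (-(N : ℤ)) * M) :=
          mul_le_mul_of_nonneg_left (mul_le_mul_of_nonneg_left (hMle S) (hg0 _)) (by positivity)
  have hq6 : ∑ k ∈ S, (1 + |(k : ℝ)|) * (if k = (N : ℤ) then M * g (N : ℤ) else 0) ≤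
      ((N : ℝ) + 1) * (M * g (N : ℤ)) := by
    rw [hqite ((N : ℤ)) (M * g (N : ℤ)) (by rw [hS, Finset.mem_Icc]; omega)]
    have e : |(((N : ℤ) : ℤ) : ℝ)| = (N : ℝ) := by
      rw [abs_of_nonneg (by positivity)]; push_cast; ring
    rw [e, show (1 + (N : ℝ)) = (N : ℝ) + 1 by ring]
  have hq7 : ∑ k ∈ S, (1 + |(k : ℝ)|) * (if k = -(N : ℤ) - 1 then g (-(N : ℤ)) * M else 0) ≤
      ((N : ℝ) + 2) * (g (-(N : ℤ)) * M) := by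
    rw [hqite (-(N : ℤ) - 1) (g (-(N : ℤ)) * M) (by rw [hS, Finset.mem_Icc]; omega)]
    have e : |((-(N : ℤ) - 1 : ℤ) : ℝ)| = (N : ℝ) + 1 := by
      rw [show ((-(N : ℤ) - 1 : ℤ) : ℝ) = -((N : ℝ) + 1) by push_cast; ring, abs_neg,
        abs_of_nonneg (by positivity)]
    rw [e, show (1 + ((N : ℝ) + 1)) = (N : ℝ) + 2 by ring]
  have hq8 : ∑ k ∈ S, (1 + |(k : ℝ)|) * (g (k + 1) * g (N : ℤ)) ≤
      ((N : ℝ) + 2) * (M * g (N : ℤ)) := by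
    calc ∑ k ∈ S, (1 + |(k : ℝ)|) * (g (k + 1) * g (N : ℤ))
        = ∑ k ∈ S, ((1 + |(k : ℝ)|) * g (k + 1)) * g (N : ℤ) :=
          Finset.sum_congr rfl fun k _ => by ring
      _ ≤ ∑ k ∈ S, (((N : ℝ) + 2) * g (k + 1)) * g (N : ℤ) :=
          Finset.sum_le_sum fun k _ => mul_le_mul_of_nonneg_right (hw3 k) (hg0 _)
      _ = ((N : ℝ) + 2) * ((∑ k ∈ S, g (k + 1)) * g (N : ℤ)) := by
          rw [← Finset.sum_mul, ← Finset.mul_sum, mul_assoc]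
      _ ≤ ((N : ℝ) + 2) * (M * g (N : ℤ)) :=
          mul_le_mul_of_nonneg_left (mul_le_mul_of_nonneg_right (hshift 1 S) (hg0 _)) (by positivity)
  have hbig : ∑ k ∈ S, (1 + |(k : ℝ)|) * B' k ≤
      (4 * (N : ℝ) + 6) * M * (g (-(N : ℤ)) + g (N : ℤ)) := by
    have hring : ((N : ℝ) + 2) * (g (-(N : ℤ)) * M) + ((N : ℝ) + 2) * (M * g (N : ℤ))
        + ((N : ℝ) + 1) * (g (-(N : ℤ)) * M) + ((N : ℝ) + 1) * (M * g (N : ℤ))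
        + ((N : ℝ) + 1) * (g (-(N : ℤ)) * M) + ((N : ℝ) + 1) * (M * g (N : ℤ))
        + ((N : ℝ) + 2) * (g (-(N : ℤ)) * M) + ((N : ℝ) + 2) * (M * g (N : ℤ))
        = (4 * (N : ℝ) + 6) * M * (g (-(N : ℤ)) + g (N : ℤ)) := by ring
    simp only [hB', mul_add, Finset.sum_add_distrib]
    linarith [hq1, hq2, hq3, hq4, hq5, hq6, hq7, hq8]
  calc ∑' k : ℤ, (1 + |(k : ℝ)|) * |Qop (truncK K N) g g k - Qop K g g k|
      = ∑ k ∈ S, (1 + |(k : ℝ)|) * |Qop (truncK K N) g g k - Qop K g g k| := by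
        refine tsum_eq_sum ?_
        intro k hk
        rw [hQzero (truncK K N) k hk, hQzero K k hk, sub_self, abs_zero, mul_zero]
    _ ≤ ∑ k ∈ S, (1 + |(k : ℝ)|) * (CK * B' k) :=
        Finset.sum_le_sum fun k _ => mul_le_mul_of_nonneg_left (hinner k) (by positivity)
    _ = CK * ∑ k ∈ S, (1 + |(k : ℝ)|) * B' k := by
        rw [Finset.mul_sum]
        exact Finset.sum_congr rfl fun k _ => by ring
    _ ≤ CK * ((4 * (N : ℝ) + 6) * M * (g (-(N : ℤ)) + g (N : ℤ))) :=
        mul_le_mul_of_nonneg_left hbig hCK.le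
    _ = (6 + 4 * (N : ℝ)) * CK * M * (g (-(N : ℤ)) + g (N : ℤ)) := by ring
end

section
/- If g : ℤ → ℝ satisfies the detailed balance condition K(k,l−1) g(k) g(l−1) = K(l,k−1) g(l) g(k−1) for all k,l ∈ ℤ with respect to a strictly positive kernel K, and g(i) = 0 for some i ∈ ℤ, then g ≡ 0 on ℤ. -/
/-! Taking `k = m`, `l = m + 1` in the detailed balance condition gives
`K m m * g m ^ 2 = K (m + 1) (m - 1) * g (m + 1) * g (m - 1)`, so with `K m m ≠ 0` a zero of `g`
at a neighbour of `m` forces `g m = 0`; induction up and down from `i` spreads the zero over `ℤ`. -/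

section DetailedBalance

variable {R : Type*} [CommRing R] {K : ℤ → ℤ → R} {g : ℤ → R}

theorem detailedBalance_diag
    (hdb : ∀ k l : ℤ, K k (l - 1) * g k * g (l - 1) = K l (k - 1) * g l * g (k - 1)) (m : ℤ) :
    K m m * (g m * g m) = K (m + 1) (m - 1) * g (m + 1) * g (m - 1) := by
  simpa [mul_assoc] using hdb m (m + 1)

theorem eq_zero_of_neighbor_eq_zero [NoZeroDivisors R]
    (hdb : ∀ k l : ℤ, K k (l - 1) * g k * g (l - 1) = K l (k - 1) * g l * g (k - 1))
    {m : ℤ} (hK : K m m ≠ 0) (h : g (m + 1) = 0 ∨ g (m - 1) = 0) : g m = 0 := by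
  have hsq : K m m * (g m * g m) = 0 := by
    rcases h with h | h <;> simp [detailedBalance_diag hdb m, h]
  exact mul_self_eq_zero.mp ((mul_eq_zero.mp hsq).resolve_left hK)

end DetailedBalance

theorem detailed_balance_zero_propagates (K : ℤ → ℤ → ℝ) (hK : ∀ k l, 0 < K k l)
    (g : ℤ → ℝ)
    (hdb : ∀ k l : ℤ, K k (l - 1) * g k * g (l - 1) = K l (k - 1) * g l * g (k - 1))
    (i : ℤ) (hi : g i = 0) :
    ∀ k : ℤ, g k = 0 := by
  intro k
  induction k using Int.inductionOn' (b := i) with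
  | zero => exact hi
  | succ m _ hm =>
    exact eq_zero_of_neighbor_eq_zero hdb (hK _ _).ne' (Or.inr (by simpa using hm))
  | pred m _ hm =>
    exact eq_zero_of_neighbor_eq_zero hdb (hK _ _).ne' (Or.inl (by simpa using hm))
end

section
/- Any strictly positive function g : ℤ → (0,∞) satisfying the detailed balance condition with respect to a strictly positive kernel K is of the form g(k) = ψ̃(k) κ^{−|k|} (g(1)/g(−1))^{k/2} g(0), where κ = √(K(1,−1)/K(0,0)) and ψ̃(k) = ∏_{j=1}^k K(1,j−1)/K(j,0) for k>0, ψ̃(0)=1, ψ̃(k) = ∏_{j=k}^{−1} K(j+1,−1)/K(0,j) for k<0. In particular g(0) = κ √(g(1) g(−1)). -/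
open scoped BigOperators

/-- The function ψ̃ built from the kernel:
`ψ̃(k) = ∏_{j=1}^k K(1,j−1)/K(j,0)` for `k > 0`, `ψ̃(0) = 1`, and
`ψ̃(k) = ∏_{j=k}^{−1} K(j+1,−1)/K(0,j)` for `k < 0`. -/
noncomputable def psiTilde (K : ℤ → ℤ → ℝ) (k : ℤ) : ℝ :=
  if 0 ≤ k then ∏ j ∈ Finset.range k.toNat, K 1 (j : ℤ) / K ((j : ℤ) + 1) 0
  else ∏ i ∈ Finset.range (-k).toNat, K (-(i : ℤ)) (-1) / K 0 (-1 - (i : ℤ))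

theorem detailed_balance_functions_form (K : ℤ → ℤ → ℝ) (hK : ∀ k l, 0 < K k l)
    (g : ℤ → ℝ) (hg : ∀ k, 0 < g k)
    (hdb : ∀ k l : ℤ, K k (l - 1) * g k * g (l - 1) = K l (k - 1) * g l * g (k - 1)) :
    (g 0 = Real.sqrt (K 1 (-1) / K 0 0) * Real.sqrt (g 1 * g (-1))) ∧
      ∀ k : ℤ, g k = psiTilde K k * Real.sqrt (K 1 (-1) / K 0 0) ^ (-|k|) *
        (g 1 / g (-1)) ^ ((k : ℝ) / 2) * g 0 := by
  have hg0 := hg 0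
  have hg1 := hg 1
  have hgm1 := hg (-1)
  set c := Real.sqrt (K 1 (-1) / K 0 0) with hc
  have hcpos : 0 < c := Real.sqrt_pos.mpr (div_pos (hK 1 (-1)) (hK 0 0))
  set s := Real.sqrt (g 1 / g (-1)) with hs
  have hspos : 0 < s := Real.sqrt_pos.mpr (div_pos hg1 hgm1)
  set t := Real.sqrt (g 1 * g (-1)) with ht
  have htpos : 0 < t := Real.sqrt_pos.mpr (mul_pos hg1 hgm1)
  -- g 0 = c * t
  have h00 : K 0 0 * g 0 * g 0 = K 1 (-1) * g 1 * g (-1) := by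
    have h := hdb 0 1
    norm_num at h
    linarith
  have hg0eq : g 0 = c * t := by
    have hK00 : K 0 0 ≠ 0 := (hK 0 0).ne'
    have h1 : g 0 * g 0 = (K 1 (-1) / K 0 0) * (g 1 * g (-1)) := by
      field_simp
      linear_combination h00
    have h2 : (c * t) * (c * t) = (K 1 (-1) / K 0 0) * (g 1 * g (-1)) := by
      have hc2 : c * c = K 1 (-1) / K 0 0 :=
        Real.mul_self_sqrt (div_pos (hK 1 (-1)) (hK 0 0)).le
      have ht2 : t * t = g 1 * g (-1) := Real.mul_self_sqrt (mul_pos hg1 hgm1).le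
      calc (c * t) * (c * t) = (c * c) * (t * t) := by ring
        _ = _ := by rw [hc2, ht2]
    exact (mul_self_inj hg0.le (mul_pos hcpos htpos).le).mp (h1.trans h2.symm)
  -- g 1 = s * t  and  t = s * g (-1)
  have hst : s * t = g 1 := by
    rw [hs, ht, ← Real.sqrt_mul (div_pos hg1 hgm1).le]
    rw [show g 1 / g (-1) * (g 1 * g (-1)) = g 1 * g 1 by field_simp]
    exact Real.sqrt_mul_self hg1.le
  have hts : t = s * g (-1) := by
    have key : s * (s * g (-1)) = s * t := by
      have hs2 : s * s = g 1 / g (-1) := Real.mul_self_sqrt (div_pos hg1 hgm1).le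
      rw [hst]
      calc s * (s * g (-1)) = (s * s) * g (-1) := by ring
        _ = g 1 := by rw [hs2]; field_simp
    exact (mul_left_cancel₀ hspos.ne' key).symm
  have hg1eq : g 1 = s / c * g 0 := by
    rw [hg0eq, ← hst]; field_simp
  have hgm1eq : g (-1) = 1 / (s * c) * g 0 := by
    rw [hg0eq, hts]; field_simp
  -- recursions
  have fwd : ∀ k : ℤ, g k * (K k 0 * g 0) = K 1 (k - 1) * g 1 * g (k - 1) := by
    intro k
    have h := hdb k 1
    norm_num at h
    linarith
  have bwd : ∀ k : ℤ, g (k - 1) * (K 0 (k - 1) * g 0) = K k (-1) * g k * g (-1) := by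
    intro k
    have h := hdb k 0
    norm_num at h
    linarith
  -- positive side induction
  have hP : ∀ n : ℕ, g (n : ℤ) =
      (∏ j ∈ Finset.range n, K 1 (j : ℤ) / K ((j : ℤ) + 1) 0) * (s / c) ^ n * g 0 := by
    intro n
    induction n with
    | zero => simp
    | succ n ih =>
      have key := fwd ((n : ℤ) + 1)
      rw [show ((n : ℤ) + 1) - 1 = (n : ℤ) by ring] at key
      rw [ih, hg1eq] at key
      have hKn : K ((n : ℤ) + 1) 0 ≠ 0 := (hK _ _).ne'
      push_cast
      rw [Finset.prod_range_succ, pow_succ]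
      set A := ∏ j ∈ Finset.range n, K 1 (j : ℤ) / K ((j : ℤ) + 1) 0 with hA
      have hmul : ((A * (K 1 (n : ℤ) / K ((n : ℤ) + 1) 0)) * ((s / c) ^ n * (s / c)) * g 0) *
          (K ((n : ℤ) + 1) 0 * g 0) = g ((n : ℤ) + 1) * (K ((n : ℤ) + 1) 0 * g 0) := by
        rw [key]
        field_simp
      exact (mul_right_cancel₀ (mul_ne_zero hKn hg0.ne') hmul).symm
  -- negative side induction
  have hQ : ∀ n : ℕ, g (-(n : ℤ)) =
      (∏ i ∈ Finset.range n, K (-(i : ℤ)) (-1) / K 0 (-1 - (i : ℤ))) *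
        (1 / (s * c)) ^ n * g 0 := by
    intro n
    induction n with
    | zero => simp
    | succ n ih =>
      have key := bwd (-(n : ℤ))
      rw [show (-(n : ℤ)) - 1 = -((n : ℤ) + 1) by ring] at key
      rw [ih, hgm1eq] at key
      have hKn : K 0 (-((n : ℤ) + 1)) ≠ 0 := (hK _ _).ne'
      have hKn2 : K 0 (-1 - (n : ℤ)) ≠ 0 := (hK _ _).ne'
      have hs' : s ≠ 0 := hspos.ne'
      have hc' : c ≠ 0 := hcpos.ne'
      push_cast
      rw [Finset.prod_range_succ, pow_succ]
      rw [show (-1 - (n : ℤ)) = -((n : ℤ) + 1) by ring]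
      set B := ∏ i ∈ Finset.range n, K (-(i : ℤ)) (-1) / K 0 (-1 - (i : ℤ)) with hB
      have hmul : ((B * (K (-(n : ℤ)) (-1) / K 0 (-((n : ℤ) + 1)))) *
          ((1 / (s * c)) ^ n * (1 / (s * c))) * g 0) * (K 0 (-((n : ℤ) + 1)) * g 0) =
          g (-((n : ℤ) + 1)) * (K 0 (-((n : ℤ) + 1)) * g 0) := by
        rw [key]
        obtain ⟨q, hq⟩ : ∃ q, (1 / (s * c)) ^ n = q := ⟨_, rfl⟩
        rw [hq]
        linear_combination (B * K (-(n : ℤ)) (-1) * q * (1 / (s * c)) * g 0 * g 0) *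
          mul_inv_cancel₀ hKn
      exact (mul_right_cancel₀ (mul_ne_zero hKn hg0.ne') hmul).symm
  -- rpow to zpow conversion
  have hrpow : ∀ k : ℤ, (g 1 / g (-1)) ^ ((k : ℝ) / 2) = s ^ k := by
    intro k
    have hr0 : (0:ℝ) < g 1 / g (-1) := div_pos hg1 hgm1
    rw [show ((k : ℝ) / 2) = (1 / 2 : ℝ) * (k : ℝ) by ring,
      Real.rpow_mul hr0.le, ← Real.sqrt_eq_rpow, ← hs]
    exact_mod_cast Real.rpow_intCast s k
  constructor
  · rw [hg0eq]
  · intro k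
    rcases k.eq_nat_or_neg with ⟨n, rfl | rfl⟩
    · -- k = n ≥ 0
      have hψ : psiTilde K (n : ℤ) =
          ∏ j ∈ Finset.range n, K 1 (j : ℤ) / K ((j : ℤ) + 1) 0 := by
        simp only [psiTilde]
        rw [if_pos (Int.natCast_nonneg n), Int.toNat_natCast]
      rw [hψ, hrpow, hP n, abs_of_nonneg (Int.natCast_nonneg n)]
      simp only [zpow_neg, zpow_natCast]
      rw [div_pow]
      ring
    · -- k = -n
      rcases n with _ | m
      · rw [show (-((0:ℕ):ℤ)) = ((0:ℕ):ℤ) by norm_num]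
        have hψ : psiTilde K ((0:ℕ):ℤ) = 1 := by
          simp [psiTilde]
        rw [hψ, hrpow, hP 0]
        simp
      · have hneg : ¬ (0 : ℤ) ≤ -((m + 1 : ℕ) : ℤ) := by omega
        have htn : (-(-((m + 1 : ℕ) : ℤ))).toNat = m + 1 := by omega
        have hψ : psiTilde K (-((m + 1 : ℕ) : ℤ)) =
            ∏ i ∈ Finset.range (m + 1), K (-(i : ℤ)) (-1) / K 0 (-1 - (i : ℤ)) := by
          simp only [psiTilde]
          rw [if_neg hneg, htn]
        have habs : |(-((m + 1 : ℕ) : ℤ))| = ((m + 1 : ℕ) : ℤ) := by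
          rw [abs_neg, Int.abs_natCast]
        rw [hψ, hrpow, hQ (m + 1), habs]
        simp only [zpow_neg, zpow_natCast]
        rw [show ((1:ℝ) / (s * c)) ^ (m + 1) = (c ^ (m + 1))⁻¹ * (s ^ (m + 1))⁻¹ by
          rw [one_div, inv_pow, mul_pow, mul_inv]; ring]
        ring
end

section
/- A kernel K : ℤ² → (0,∞) admits detailed balancing (i.e. there exists g : ℤ → (0,∞) with K(k,l−1) g(k) g(l−1) = K(l,k−1) g(l) g(k−1) for all k,l) if and only if the function ψ(k) := ψ̃(k) κ^{−|k|} itself satisfies the detailed balance condition. -/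
open scoped BigOperators

/-- `ψ(k) = ψ̃(k) κ^{−|k|}` with `κ = √(K(1,−1)/K(0,0))`. -/
noncomputable def psiFun (K : ℤ → ℤ → ℝ) (k : ℤ) : ℝ :=
  psiTilde K k * Real.sqrt (K 1 (-1) / K 0 0) ^ (-|k|)

lemma psiTilde_pos (K : ℤ → ℤ → ℝ) (hK : ∀ k l, 0 < K k l) (k : ℤ) :
    0 < psiTilde K k := by
  unfold psiTilde
  split <;> exact Finset.prod_pos (fun i _ => div_pos (hK _ _) (hK _ _))

lemma psiFun_pos (K : ℤ → ℤ → ℝ) (hK : ∀ k l, 0 < K k l) (k : ℤ) :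
    0 < psiFun K k := by
  have hκ : (0:ℝ) < Real.sqrt (K 1 (-1) / K 0 0) :=
    Real.sqrt_pos.mpr (div_pos (hK _ _) (hK _ _))
  exact mul_pos (psiTilde_pos K hK k) (zpow_pos hκ _)

lemma psiTilde_succ (K : ℤ → ℤ → ℝ) (k : ℤ) (hk : 1 ≤ k) :
    psiTilde K k = psiTilde K (k-1) * (K 1 (k-1) / K k 0) := by
  unfold psiTilde
  rw [if_pos (by omega : (0:ℤ) ≤ k), if_pos (by omega : (0:ℤ) ≤ k - 1)]
  have h1 : k.toNat = (k-1).toNat + 1 := by omega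
  rw [h1, Finset.prod_range_succ]
  have h2 : (((k-1).toNat : ℤ)) = k - 1 := by omega
  rw [h2]
  have h3 : k - 1 + 1 = k := by ring
  rw [h3]

lemma psiTilde_nonpos (K : ℤ → ℤ → ℝ) (k : ℤ) (hk : k ≤ 0) :
    psiTilde K k
      = ∏ i ∈ Finset.range (-k).toNat, K (-(i : ℤ)) (-1) / K 0 (-1 - (i : ℤ)) := by
  rcases lt_or_eq_of_le hk with h | h
  · rw [psiTilde, if_neg (by omega)]
  · subst h; simp [psiTilde]

lemma psiTilde_pred (K : ℤ → ℤ → ℝ) (k : ℤ) (hk : k ≤ 0) :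
    psiTilde K (k-1) = psiTilde K k * (K k (-1) / K 0 (k-1)) := by
  rw [psiTilde_nonpos K k hk, psiTilde_nonpos K (k-1) (by omega)]
  have h1 : (-(k-1)).toNat = (-k).toNat + 1 := by omega
  rw [h1, Finset.prod_range_succ]
  have h2 : (((-k).toNat : ℤ)) = -k := by omega
  rw [h2]
  have h3 : -(-k) = k := by ring
  have h4 : -1 - -k = k - 1 := by ring
  rw [h3, h4]

lemma psiFun_ratio (K : ℤ → ℤ → ℝ) (hK : ∀ k l, 0 < K k l)
    (hkey : ∀ m : ℤ, K m (-1) * K 1 (m-1) * K 0 0 = K 0 (m-1) * K 1 (-1) * K m 0)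
    (k : ℤ) :
    psiFun K k = psiFun K (k-1) * (K 1 (k-1) / K k 0)
        * (Real.sqrt (K 1 (-1) / K 0 0))⁻¹ := by
  set κ := Real.sqrt (K 1 (-1) / K 0 0) with hκdef
  have hκ : 0 < κ := Real.sqrt_pos.mpr (div_pos (hK _ _) (hK _ _))
  have hκ2 : κ ^ 2 = K 1 (-1) / K 0 0 :=
    Real.sq_sqrt (le_of_lt (div_pos (hK _ _) (hK _ _)))
  by_cases hk : 1 ≤ k
  · have habs : -|k| = -|k-1| + (-1) := by
      rw [abs_of_pos (by omega : (0:ℤ) < k), abs_of_nonneg (by omega : (0:ℤ) ≤ k-1)]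
      ring
    rw [psiFun, psiFun, psiTilde_succ K k hk, habs, zpow_add₀ hκ.ne', zpow_neg_one]
    ring
  · push_neg at hk
    have hk' : k ≤ 0 := by omega
    have habs : -|k| = -|k-1| + 1 := by
      rw [abs_of_nonpos hk', abs_of_neg (by omega : k-1 < 0)]
      ring
    rw [psiFun, psiFun, psiTilde_pred K k hk', habs, zpow_add₀ hκ.ne', zpow_one]
    have hfac : (K k (-1) / K 0 (k-1)) * (K 1 (k-1) / K k 0) * κ⁻¹ = κ := by
      have h := hkey k
      have h1 := (hK k (-1)).ne'
      have h2 := (hK 0 (k-1)).ne'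
      have h3 := (hK 1 (k-1)).ne'
      have h4 := (hK k 0).ne'
      have h5 := (hK 0 0).ne'
      have h6 := hκ.ne'
      have hκ2' : κ * κ * K 0 0 = K 1 (-1) := by
        have hh := hκ2
        rw [pow_two] at hh
        rw [hh]
        field_simp
      field_simp
      apply mul_right_cancel₀ h5
      linear_combination h - K 0 (k-1) * K k 0 * hκ2'
    calc psiTilde K k * (κ ^ (-|k-1|) * κ)
        = psiTilde K k * κ ^ (-|k-1|) * κ := by ring
      _ = psiTilde K k * κ ^ (-|k-1|)
            * ((K k (-1) / K 0 (k-1)) * (K 1 (k-1) / K k 0) * κ⁻¹) := by rw [hfac]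
      _ = psiTilde K k * (K k (-1) / K 0 (k-1)) * κ ^ (-|k-1|) * (K 1 (k-1) / K k 0)
            * κ⁻¹ := by ring

theorem detailed_balancing_iff_psi_detailed_balance (K : ℤ → ℤ → ℝ)
    (hK : ∀ k l, 0 < K k l) :
    (∃ g : ℤ → ℝ, (∀ k, 0 < g k) ∧
        ∀ k l : ℤ, K k (l - 1) * g k * g (l - 1) = K l (k - 1) * g l * g (k - 1)) ↔
      (∀ k l : ℤ, K k (l - 1) * psiFun K k * psiFun K (l - 1) =
        K l (k - 1) * psiFun K l * psiFun K (k - 1)) := by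
  constructor
  · rintro ⟨g, hg, hDB⟩ k l
    have hgne : ∀ m : ℤ, g m ≠ 0 := fun m => (hg m).ne'
    -- step relation: K m 0 * g m * g 0 = K 1 (m-1) * g 1 * g (m-1)
    have hr : ∀ m : ℤ, K m 0 * g m * g 0 = K 1 (m-1) * g 1 * g (m-1) := by
      intro m
      have h := hDB m 1
      norm_num at h
      exact h
    -- key polynomial identity
    have key : ∀ k l : ℤ, K k (l-1) * K 1 (k-1) * K l 0 = K l (k-1) * K 1 (l-1) * K k 0 := by
      intro k l
      have h := hDB k l
      have hP : (g 1 * g (k-1) * g (l-1) * g 0 * g 0) ≠ 0 := by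
        simp [hgne]
      apply mul_right_cancel₀ hP
      calc K k (l-1) * K 1 (k-1) * K l 0 * (g 1 * g (k-1) * g (l-1) * g 0 * g 0)
          = K k (l-1) * (K 1 (k-1) * g 1 * g (k-1)) * K l 0 * g (l-1) * g 0 * g 0 := by ring
        _ = K k (l-1) * (K k 0 * g k * g 0) * K l 0 * g (l-1) * g 0 * g 0 := by rw [hr k]
        _ = (K k (l-1) * g k * g (l-1)) * (K k 0 * K l 0 * g 0 * g 0 * g 0) := by ring
        _ = (K l (k-1) * g l * g (k-1)) * (K k 0 * K l 0 * g 0 * g 0 * g 0) := by rw [h]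
        _ = K l (k-1) * (K l 0 * g l * g 0) * K k 0 * g (k-1) * g 0 * g 0 := by ring
        _ = K l (k-1) * (K 1 (l-1) * g 1 * g (l-1)) * K k 0 * g (k-1) * g 0 * g 0 := by
            rw [hr l]
        _ = K l (k-1) * K 1 (l-1) * K k 0 * (g 1 * g (k-1) * g (l-1) * g 0 * g 0) := by ring
    have hkey0 : ∀ m : ℤ, K m (-1) * K 1 (m-1) * K 0 0 = K 0 (m-1) * K 1 (-1) * K m 0 := by
      intro m
      have := key m 0
      norm_num at this
      linarith [this]
    have hratio := psiFun_ratio K hK hkey0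
    have hκ : (0:ℝ) < Real.sqrt (K 1 (-1) / K 0 0) :=
      Real.sqrt_pos.mpr (div_pos (hK _ _) (hK _ _))
    rw [hratio k, hratio l]
    have key' : K k (l-1) * (K 1 (k-1) / K k 0) = K l (k-1) * (K 1 (l-1) / K l 0) := by
      have h := key k l
      have h1 := (hK k 0).ne'
      have h2 := (hK l 0).ne'
      field_simp
      linear_combination h
    calc K k (l - 1) * (psiFun K (k - 1) * (K 1 (k - 1) / K k 0)
            * (Real.sqrt (K 1 (-1) / K 0 0))⁻¹) * psiFun K (l - 1)
        = (K k (l-1) * (K 1 (k-1) / K k 0)) * psiFun K (k-1) * psiFun K (l-1)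
            * (Real.sqrt (K 1 (-1) / K 0 0))⁻¹ := by ring
      _ = (K l (k-1) * (K 1 (l-1) / K l 0)) * psiFun K (k-1) * psiFun K (l-1)
            * (Real.sqrt (K 1 (-1) / K 0 0))⁻¹ := by rw [key']
      _ = K l (k - 1) * (psiFun K (l - 1) * (K 1 (l - 1) / K l 0)
            * (Real.sqrt (K 1 (-1) / K 0 0))⁻¹) * psiFun K (k - 1) := by ring
  · intro h
    exact ⟨psiFun K, psiFun_pos K hK, h⟩
end

section
/- A strictly positive kernel K : ℤ² → (0,∞) admits detailed balancing if and only if it satisfies the extended Becker–Döring assumption, i.e. K(k,l−1)/K(l,k−1) = K(k,0)K(1,l−1)/(K(l,0)K(1,k−1)) for k,l ≥ 1; = (K(0,l−1)/K(0,k−1))·(K(k,−1)/K(l,−1)) for k,l ≤ 0; = (K(k,0)/K(1,k−1))·(K(0,l−1)/K(l,−1))·(K(1,−1)/K(0,0)) for k ≥ 1, l ≤ 0; and = (K(1,l−1)/K(l,0))·(K(k,−1)/K(0,k−1))·(K(0,0)/K(1,−1)) for k ≤ 0, l ≥ 1. -/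
/-!
Writing `h k = g k / g (k - 1)`, detailed balance becomes `K k (l - 1) * h k = K l (k - 1) * h l`,
i.e. `K k (l - 1) / K l (k - 1) = h l / h k`, and `g` is recovered from `h` as a telescoping
product. Normalising `h 1 = 1`, these ratios force `h` along the paths `1 → l` (for `l ≥ 1`) and
`1 → 0 → l` (for `l ≤ 0`); the four extended Becker–Döring identities say exactly that this
forced `h` balances `K`.
-/

open Finset

theorem Int.exists_sub_pred_eq {M : Type*} [AddCommGroup M] (f : ℤ → M) :
    ∃ F : ℤ → M, ∀ k, F k - F (k - 1) = f k := by
  refine ⟨fun k => ∑ i ∈ Ioc 0 k, f i - ∑ i ∈ Ioc k 0, f i, fun k => ?_⟩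
  beta_reduce
  rcases le_or_gt k 0 with hk | hk
  · have hIoc : Ioc (k - 1) 0 = insert k (Ioc k 0) := by ext; simp; omega
    rw [hIoc, sum_insert (by simp), Ioc_eq_empty_of_le hk,
      Ioc_eq_empty_of_le (by omega : k - 1 ≤ 0)]
    abel
  · have hIoc : Ioc 0 k = insert k (Ioc 0 (k - 1)) := by ext; simp; omega
    rw [hIoc, sum_insert (by simp), Ioc_eq_empty_of_le hk.le,
      Ioc_eq_empty_of_le (by omega : 0 ≤ k - 1)]
    abel

theorem Real.exists_pos_eq_mul_pred (h : ℤ → ℝ) (hh : ∀ k, 0 < h k) :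
    ∃ g : ℤ → ℝ, (∀ k, 0 < g k) ∧ ∀ k, g k = h k * g (k - 1) := by
  obtain ⟨F, hF⟩ := Int.exists_sub_pred_eq (fun k => Real.log (h k))
  refine ⟨fun k => Real.exp (F k), fun k => Real.exp_pos _, fun k => ?_⟩
  rw [← Real.exp_log (hh k), ← Real.exp_add, ← hF k, sub_add_cancel]

def IsDetailedBalanced (K : ℤ → ℤ → ℝ) (g : ℤ → ℝ) : Prop :=
  ∀ k l, K k (l - 1) * g k * g (l - 1) = K l (k - 1) * g l * g (k - 1)

def IsBalancedBy (K : ℤ → ℤ → ℝ) (h : ℤ → ℝ) : Prop :=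
  ∀ k l, K k (l - 1) * h k = K l (k - 1) * h l

theorem exists_isDetailedBalanced_iff (K : ℤ → ℤ → ℝ) :
    (∃ g : ℤ → ℝ, (∀ k, 0 < g k) ∧ IsDetailedBalanced K g) ↔
      ∃ h : ℤ → ℝ, (∀ k, 0 < h k) ∧ IsBalancedBy K h := by
  constructor
  · rintro ⟨g, hg, hbal⟩
    refine ⟨fun k => g k / g (k - 1), fun k => div_pos (hg k) (hg _), fun k l => ?_⟩
    have hgk := (hg (k - 1)).ne'
    have hgl := (hg (l - 1)).ne'
    field_simp
    linear_combination hbal k l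
  · rintro ⟨h, hh, hbal⟩
    obtain ⟨g, hg, hstep⟩ := Real.exists_pos_eq_mul_pred h hh
    refine ⟨g, hg, fun k l => ?_⟩
    rw [hstep k, hstep l]
    linear_combination g (k - 1) * g (l - 1) * hbal k l

theorem isBalancedBy_iff_div_eq {K : ℤ → ℤ → ℝ} {h : ℤ → ℝ} (hK : ∀ k l, K k l ≠ 0)
    (hh : ∀ k, h k ≠ 0) :
    IsBalancedBy K h ↔ ∀ k l, K k (l - 1) / K l (k - 1) = h l / h k := by
  refine forall₂_congr fun k l => ?_
  rw [div_eq_div_iff (hK _ _) (hh k), mul_comm (h l)]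

noncomputable def normalizedBalancer (K : ℤ → ℤ → ℝ) (l : ℤ) : ℝ :=
  if 1 ≤ l then K 1 (l - 1) / K l 0 else K 1 (-1) / K 0 0 * (K 0 (l - 1) / K l (-1))

theorem normalizedBalancer_pos {K : ℤ → ℤ → ℝ} (hK : ∀ k l, 0 < K k l) (l : ℤ) :
    0 < normalizedBalancer K l := by
  unfold normalizedBalancer
  split_ifs
  · exact div_pos (hK _ _) (hK _ _)
  · exact mul_pos (div_pos (hK _ _) (hK _ _)) (div_pos (hK _ _) (hK _ _))

theorem IsBalancedBy.normalizedBalancer_eq {K : ℤ → ℤ → ℝ} {h : ℤ → ℝ} (hbal : IsBalancedBy K h)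
    (hK : ∀ k l, K k l ≠ 0) (hh : ∀ k, h k ≠ 0) (l : ℤ) :
    normalizedBalancer K l = h l / h 1 := by
  have hdiv := (isBalancedBy_iff_div_eq hK hh).1 hbal
  unfold normalizedBalancer
  split_ifs
  · simpa using hdiv 1 l
  · have h10 := hdiv 1 0
    have h0l := hdiv 0 l
    norm_num at h10 h0l
    rw [h10, h0l]
    field_simp [hh 0]

theorem exists_isBalancedBy_iff {K : ℤ → ℤ → ℝ} (hK : ∀ k l, 0 < K k l) :
    (∃ h : ℤ → ℝ, (∀ k, 0 < h k) ∧ IsBalancedBy K h) ↔ IsBalancedBy K (normalizedBalancer K) := by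
  refine ⟨fun ⟨h, hh, hbal⟩ k l => ?_, fun hbal => ⟨_, normalizedBalancer_pos hK, hbal⟩⟩
  have hK' : ∀ k l, K k l ≠ 0 := fun k l => (hK k l).ne'
  have hh' : ∀ k, h k ≠ 0 := fun k => (hh k).ne'
  rw [hbal.normalizedBalancer_eq hK' hh', hbal.normalizedBalancer_eq hK' hh', mul_div_assoc',
    mul_div_assoc', hbal k l]

def ExtendedBeckerDoering (K : ℤ → ℤ → ℝ) : Prop :=
  (∀ k l : ℤ, 1 ≤ k → 1 ≤ l →
      K k (l - 1) / K l (k - 1) = K k 0 * K 1 (l - 1) / (K l 0 * K 1 (k - 1))) ∧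
    (∀ k l : ℤ, k ≤ 0 → l ≤ 0 →
      K k (l - 1) / K l (k - 1) = K 0 (l - 1) / K 0 (k - 1) * (K k (-1) / K l (-1))) ∧
    (∀ k l : ℤ, 1 ≤ k → l ≤ 0 →
      K k (l - 1) / K l (k - 1) =
        K k 0 / K 1 (k - 1) * (K 0 (l - 1) / K l (-1)) * (K 1 (-1) / K 0 0)) ∧
    (∀ k l : ℤ, k ≤ 0 → 1 ≤ l →
      K k (l - 1) / K l (k - 1) =
        K 1 (l - 1) / K l 0 * (K k (-1) / K 0 (k - 1)) * (K 0 0 / K 1 (-1)))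

theorem normalizedBalancer_of_one_le (K : ℤ → ℤ → ℝ) {l : ℤ} (hl : 1 ≤ l) :
    normalizedBalancer K l = K 1 (l - 1) / K l 0 :=
  if_pos hl

theorem normalizedBalancer_of_nonpos (K : ℤ → ℤ → ℝ) {l : ℤ} (hl : l ≤ 0) :
    normalizedBalancer K l = K 1 (-1) / K 0 0 * (K 0 (l - 1) / K l (-1)) :=
  if_neg (by omega)

theorem isBalancedBy_normalizedBalancer_iff {K : ℤ → ℤ → ℝ} (hK : ∀ k l, 0 < K k l) :
    IsBalancedBy K (normalizedBalancer K) ↔ ExtendedBeckerDoering K := by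
  have hK' : ∀ k l, K k l ≠ 0 := fun k l => (hK k l).ne'
  rw [isBalancedBy_iff_div_eq hK' fun l => (normalizedBalancer_pos hK l).ne',
    ExtendedBeckerDoering]
  have hpp {k l : ℤ} (hk : 1 ≤ k) (hl : 1 ≤ l) : normalizedBalancer K l / normalizedBalancer K k =
      K k 0 * K 1 (l - 1) / (K l 0 * K 1 (k - 1)) := by
    rw [normalizedBalancer_of_one_le K hk, normalizedBalancer_of_one_le K hl]
    field_simp [hK']
  have hnn {k l : ℤ} (hk : k ≤ 0) (hl : l ≤ 0) : normalizedBalancer K l / normalizedBalancer K k =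
      K 0 (l - 1) / K 0 (k - 1) * (K k (-1) / K l (-1)) := by
    rw [normalizedBalancer_of_nonpos K hk, normalizedBalancer_of_nonpos K hl]
    field_simp [hK']
  have hpn {k l : ℤ} (hk : 1 ≤ k) (hl : l ≤ 0) : normalizedBalancer K l / normalizedBalancer K k =
      K k 0 / K 1 (k - 1) * (K 0 (l - 1) / K l (-1)) * (K 1 (-1) / K 0 0) := by
    rw [normalizedBalancer_of_one_le K hk, normalizedBalancer_of_nonpos K hl]
    field_simp [hK']
  have hnp {k l : ℤ} (hk : k ≤ 0) (hl : 1 ≤ l) : normalizedBalancer K l / normalizedBalancer K k =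
      K 1 (l - 1) / K l 0 * (K k (-1) / K 0 (k - 1)) * (K 0 0 / K 1 (-1)) := by
    rw [normalizedBalancer_of_nonpos K hk, normalizedBalancer_of_one_le K hl]
    field_simp [hK']
  refine ⟨fun h => ⟨fun k l hk hl => ?_, fun k l hk hl => ?_, fun k l hk hl => ?_,
    fun k l hk hl => ?_⟩, fun ⟨h₁, h₂, h₃, h₄⟩ k l => ?_⟩
  · rw [h, hpp hk hl]
  · rw [h, hnn hk hl]
  · rw [h, hpn hk hl]
  · rw [h, hnp hk hl]
  · rcases le_or_gt 1 k with hk | hk <;> rcases le_or_gt 1 l with hl | hl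
    · rw [h₁ k l hk hl, hpp hk hl]
    · rw [h₃ k l hk (by omega), hpn hk (by omega)]
    · rw [h₄ k l (by omega) hl, hnp (by omega) hl]
    · rw [h₂ k l (by omega) (by omega), hnn (by omega) (by omega)]

theorem detailed_balancing_iff_extended_BeckerDoering (K : ℤ → ℤ → ℝ)
    (hK : ∀ k l, 0 < K k l) :
    (∃ g : ℤ → ℝ, (∀ k, 0 < g k) ∧
        ∀ k l : ℤ, K k (l - 1) * g k * g (l - 1) = K l (k - 1) * g l * g (k - 1)) ↔
      ((∀ k l : ℤ, 1 ≤ k → 1 ≤ l →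
          K k (l - 1) / K l (k - 1) = K k 0 * K 1 (l - 1) / (K l 0 * K 1 (k - 1))) ∧
        (∀ k l : ℤ, k ≤ 0 → l ≤ 0 →
          K k (l - 1) / K l (k - 1) = K 0 (l - 1) / K 0 (k - 1) * (K k (-1) / K l (-1))) ∧
        (∀ k l : ℤ, 1 ≤ k → l ≤ 0 →
          K k (l - 1) / K l (k - 1) =
            K k 0 / K 1 (k - 1) * (K 0 (l - 1) / K l (-1)) * (K 1 (-1) / K 0 0)) ∧
        (∀ k l : ℤ, k ≤ 0 → 1 ≤ l →
          K k (l - 1) / K l (k - 1) =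
            K 1 (l - 1) / K l 0 * (K k (-1) / K 0 (k - 1)) * (K 0 0 / K 1 (-1)))) :=
  (exists_isDetailedBalanced_iff K).trans
    ((exists_isBalancedBy_iff hK).trans (isBalancedBy_normalizedBalancer_iff hK))
end

section
/- Weighted tail bound via relative entropy: let f, f* be probability densities on ℤ with f*(k) > 0 for all k, and let h : ℤ → [0,∞) be such that ∑_{k∈ℤ} h(k) e^{−h(k)/2} < ∞. Assume there is N₀ ∈ ℕ with f*(k) ≤ e^{−h(k)} for all |k| ≥ N₀. Then ∑_{k∈ℤ} h(k) f(k) ≤ max_{|k|<N₀} h(k) + 2 H(f|f*) + ∑_{k∈ℤ} h(k) e^{−h(k)/2} + 2, where H(f|f*) = ∑_k f(k) log(f(k)/f*(k)). -/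
open scoped BigOperators ENNReal

/-- Relative entropy `H(f|f*) = ∑ₖ f(k) log(f(k)/f*(k))`, written via the nonnegative
summand `f*(k)·Ψ(f(k)/f*(k)) = f(k)(log(f(k)/f*(k)) − 1) + f*(k)` (valid since both
densities have total mass one), with values in `[0,∞]`. -/
noncomputable def relEnt (f g : ℤ → ℝ) : ℝ≥0∞ :=
  ∑' k : ℤ, ENNReal.ofReal (f k * (Real.log (f k / g k) - 1) + g k)

theorem weighted_tail_bound_via_relative_entropy
    (f fstar : ℤ → ℝ) (hf0 : ∀ k, 0 ≤ f k) (hfs : Summable f) (hf1 : ∑' k : ℤ, f k = 1)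
    (hfstarpos : ∀ k, 0 < fstar k) (hfstars : Summable fstar)
    (hfstar1 : ∑' k : ℤ, fstar k = 1)
    (h : ℤ → ℝ) (hh0 : ∀ k, 0 ≤ h k)
    (hhs : Summable fun k : ℤ => h k * Real.exp (-h k / 2))
    (N₀ : ℕ) (hN₀ : 1 ≤ N₀)
    (htail : ∀ k : ℤ, (N₀ : ℤ) ≤ |k| → fstar k ≤ Real.exp (-h k)) :
    ∑' k : ℤ, ENNReal.ofReal (h k * f k) ≤
      ENNReal.ofReal (sSup (h '' {k : ℤ | |k| < (N₀ : ℤ)})) + 2 * relEnt f fstar +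
        ENNReal.ofReal (∑' k : ℤ, h k * Real.exp (-h k / 2)) + 2 := by
  set M := sSup (h '' {k : ℤ | |k| < (N₀ : ℤ)}) with hMdef
  set A : Set ℤ := {k : ℤ | |k| < (N₀ : ℤ)} with hAdef
  have hAfin : A.Finite := by
    apply Set.Finite.subset (Set.finite_Icc (-(N₀:ℤ)) (N₀:ℤ))
    intro k hk
    simp only [hAdef, Set.mem_setOf_eq] at hk
    rw [abs_lt] at hk
    exact Set.mem_Icc.2 ⟨hk.1.le, hk.2.le⟩
  have hbdd : BddAbove (h '' A) := (hAfin.image h).bddAbove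
  have h0mem : (0:ℤ) ∈ A := by
    simp only [hAdef, Set.mem_setOf_eq, abs_zero]
    exact_mod_cast hN₀
  have hM0 : 0 ≤ M := le_trans (hh0 0) (le_csSup hbdd ⟨0, h0mem, rfl⟩)
  have hMk : ∀ k, k ∈ A → h k ≤ M := fun k hk => le_csSup hbdd ⟨k, hk, rfl⟩
  have hf_tsum : ∑' k : ℤ, ENNReal.ofReal (f k) = 1 := by
    rw [← ENNReal.ofReal_tsum_of_nonneg hf0 hfs, hf1, ENNReal.ofReal_one]
  have key : ∀ k : ℤ, ENNReal.ofReal (h k * f k) ≤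
      A.indicator (fun k => ENNReal.ofReal M * ENNReal.ofReal (f k)) k
      + (ENNReal.ofReal (h k * Real.exp (-h k / 2))
        + 2 * ENNReal.ofReal (f k * (Real.log (f k / fstar k) - 1) + fstar k)
        + 2 * ENNReal.ofReal (f k)) := by
    intro k
    by_cases hk : k ∈ A
    · rw [Set.indicator_of_mem hk]
      refine le_trans ?_ le_self_add
      calc ENNReal.ofReal (h k * f k) ≤ ENNReal.ofReal (M * f k) :=
            ENNReal.ofReal_le_ofReal (mul_le_mul_of_nonneg_right (hMk k hk) (hf0 k))
        _ = ENNReal.ofReal M * ENNReal.ofReal (f k) := ENNReal.ofReal_mul hM0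
    · rw [Set.indicator_of_notMem hk, zero_add]
      have hk' : (N₀:ℤ) ≤ |k| := by
        simpa only [hAdef, Set.mem_setOf_eq, not_lt] using hk
      have htk := htail k hk'
      by_cases hcase : f k ≤ Real.exp (-h k / 2)
      · have hb : h k * f k ≤ h k * Real.exp (-h k / 2) :=
          mul_le_mul_of_nonneg_left hcase (hh0 k)
        exact le_trans (ENNReal.ofReal_le_ofReal hb)
          (le_add_right (le_add_right le_rfl))
      · push_neg at hcase
        have fpos : 0 < f k := lt_trans (Real.exp_pos _) hcase
        have hlogf : -h k / 2 < Real.log (f k) :=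
          (Real.lt_log_iff_exp_lt fpos).2 hcase
        have hlogstar : Real.log (fstar k) ≤ -h k :=
          (Real.log_le_iff_le_exp (hfstarpos k)).2 htk
        have hdiv : Real.log (f k / fstar k) = Real.log (f k) - Real.log (fstar k) :=
          Real.log_div fpos.ne' (hfstarpos k).ne'
        have hh2L : h k ≤ 2 * Real.log (f k / fstar k) := by
          rw [hdiv]; linarith
        have hb : h k * f k ≤
            2 * (f k * (Real.log (f k / fstar k) - 1) + fstar k) + 2 * f k := by
          nlinarith [mul_le_mul_of_nonneg_right hh2L (hf0 k), hfstarpos k]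
        calc ENNReal.ofReal (h k * f k)
            ≤ ENNReal.ofReal (2 * (f k * (Real.log (f k / fstar k) - 1) + fstar k)
                + 2 * f k) := ENNReal.ofReal_le_ofReal hb
          _ ≤ ENNReal.ofReal (2 * (f k * (Real.log (f k / fstar k) - 1) + fstar k))
                + ENNReal.ofReal (2 * f k) := ENNReal.ofReal_add_le
          _ = 2 * ENNReal.ofReal (f k * (Real.log (f k / fstar k) - 1) + fstar k)
                + 2 * ENNReal.ofReal (f k) := by
                rw [ENNReal.ofReal_mul (by norm_num : (0:ℝ) ≤ 2),
                  ENNReal.ofReal_mul (by norm_num : (0:ℝ) ≤ 2)]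
                norm_num
          _ ≤ _ := by rw [add_assoc]; exact le_add_self
  have hind : ∑' k : ℤ, A.indicator (fun k => ENNReal.ofReal M * ENNReal.ofReal (f k)) k
      ≤ ENNReal.ofReal M := by
    calc ∑' k : ℤ, A.indicator (fun k => ENNReal.ofReal M * ENNReal.ofReal (f k)) k
        ≤ ∑' k : ℤ, ENNReal.ofReal M * ENNReal.ofReal (f k) :=
          ENNReal.tsum_le_tsum (fun k => Set.indicator_le_self _ _ k)
      _ = ENNReal.ofReal M * ∑' k : ℤ, ENNReal.ofReal (f k) := ENNReal.tsum_mul_left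
      _ = ENNReal.ofReal M := by rw [hf_tsum, mul_one]
  have hS : ∑' k : ℤ, ENNReal.ofReal (h k * Real.exp (-h k / 2))
      = ENNReal.ofReal (∑' k : ℤ, h k * Real.exp (-h k / 2)) := by
    rw [ENNReal.ofReal_tsum_of_nonneg
      (fun k => mul_nonneg (hh0 k) (Real.exp_nonneg _)) hhs]
  calc ∑' k : ℤ, ENNReal.ofReal (h k * f k)
      ≤ ∑' k : ℤ, (A.indicator (fun k => ENNReal.ofReal M * ENNReal.ofReal (f k)) k
        + (ENNReal.ofReal (h k * Real.exp (-h k / 2))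
          + 2 * ENNReal.ofReal (f k * (Real.log (f k / fstar k) - 1) + fstar k)
          + 2 * ENNReal.ofReal (f k))) := ENNReal.tsum_le_tsum key
    _ = (∑' k : ℤ, A.indicator (fun k => ENNReal.ofReal M * ENNReal.ofReal (f k)) k)
        + ((∑' k : ℤ, ENNReal.ofReal (h k * Real.exp (-h k / 2)))
          + (∑' k : ℤ, 2 * ENNReal.ofReal (f k * (Real.log (f k / fstar k) - 1) + fstar k))
          + (∑' k : ℤ, 2 * ENNReal.ofReal (f k))) := by
        rw [ENNReal.tsum_add, ENNReal.tsum_add, ENNReal.tsum_add]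
    _ = (∑' k : ℤ, A.indicator (fun k => ENNReal.ofReal M * ENNReal.ofReal (f k)) k)
        + (ENNReal.ofReal (∑' k : ℤ, h k * Real.exp (-h k / 2))
          + 2 * relEnt f fstar + 2) := by
        rw [hS, ENNReal.tsum_mul_left, ENNReal.tsum_mul_left, hf_tsum, mul_one, relEnt]
    _ ≤ ENNReal.ofReal M
        + (ENNReal.ofReal (∑' k : ℤ, h k * Real.exp (-h k / 2))
          + 2 * relEnt f fstar + 2) := by gcongr
    _ = ENNReal.ofReal M + 2 * relEnt f fstar +
        ENNReal.ofReal (∑' k : ℤ, h k * Real.exp (-h k / 2)) + 2 := by ring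
end
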